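/- arXiv:1101.4889 — 8 statements merged into one kernel-verified Lean document; each statement's English description precedes it below -/
import Mathlib

section
/- A generalized quantum N-instrument {T_i}_{i=1}^M on ℋ_{2N−1}⊗…⊗ℋ₀ is extremal if and only if the following holds: whenever D_1,…,D_M are Hermitian operators on ℋ_{2N−1}⊗…⊗ℋ₀ with supp(D_i) ⊆ supp(T_i) for every i, and the sum ∑_{i=1}^M D_i belongs to the real linear span of the set {R − R′ : R, R′ deterministic quantum N-combs}, then D_i = 0 for all i. -/
/-!
Extremality of `T` is tested along the lines `c ↦ T + c • D`.

If each `D i` is Hermitian with `supp (D i) ⊆ supp (T i)`, then in an eigenbasis of `T i` the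
matrix `D i` lives on the block where `T i` is positive definite, so `T i + c • D i` stays
positive semidefinite for all small `|c|`. If moreover `∑ i, D i` lies in the span of differences
of deterministic combs, then `∑ i, T i + c • ∑ i, D i` still satisfies the (linear) normalisation
conditions of a comb; positivity of the top operator then propagates down to every `R^(n)`,
because partial traces and compressions preserve positivity. So `T ± c • D` are instruments,
and extremality forces `D = 0`.

Conversely, if `T` is an interior point of a segment `[y, z]` of instruments, then
`ker (T i) = ker (y i) ∩ ker (z i)`, so `D = y - z` satisfies the support condition, and
`∑ i, D i` is a difference of two combs. Hence `y = z = T`.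
-/

open Matrix
open scoped ComplexOrder

/-- Operators on the tensor product `ℋ_{m-1} ⊗ ⋯ ⊗ ℋ₀` of the first `m` Hilbert spaces,
where `ℋ_k = ℂ^(d k)`. -/
abbrev CombMat (d : ℕ → ℕ) (m : ℕ) :=
  Matrix (∀ k : Fin m, Fin (d k)) (∀ k : Fin m, Fin (d k)) ℂ

/-- Partial trace over the last (highest-numbered) Hilbert space. -/
noncomputable def ptrTop {d : ℕ → ℕ} {m : ℕ} (A : CombMat d (m + 1)) : CombMat d m :=
  fun i j => ∑ x : Fin (d m), A (Fin.snoc i x) (Fin.snoc j x)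

/-- Tensoring with the identity on a new highest-numbered Hilbert space:
`I_m ⊗ B`. -/
noncomputable def tensTop {d : ℕ → ℕ} {m : ℕ} (B : CombMat d m) : CombMat d (m + 1) :=
  fun i j => (if i (Fin.last m) = j (Fin.last m) then 1 else 0) * B (Fin.init i) (Fin.init j)

/-- A deterministic quantum `N`-comb on `ℋ_{2N-1} ⊗ ⋯ ⊗ ℋ₀`: a positive semidefinite
operator `R = R^(N)` admitting positive semidefinite operators `R^(n)` with
`Tr_{2n-1}[R^(n)] = I_{2n-2} ⊗ R^(n-1)` and `R^(0) = 1`. -/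
def IsDetComb (d : ℕ → ℕ) : (N : ℕ) → CombMat d (2 * N) → Prop
  | 0, R => R = 1
  | (n + 1), R => R.PosSemidef ∧
      ∃ R' : CombMat d (2 * n), IsDetComb d n R' ∧ ptrTop R = tensTop R'

/-- A generalized quantum `N`-instrument: a family of positive semidefinite operators
summing to a deterministic quantum `N`-comb. -/
def IsGQI (d : ℕ → ℕ) (N M : ℕ) (T : Fin M → CombMat d (2 * N)) : Prop :=
  (∀ i, (T i).PosSemidef) ∧ IsDetComb d N (∑ i, T i)

open Filter Topology

namespace Matrix

variable {n 𝕜 : Type*} [Fintype n] [RCLike 𝕜]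

theorem PosSemidef.ker_smul_add_smul_le_ker_sub {A B : Matrix n n 𝕜} (hA : A.PosSemidef)
    (hB : B.PosSemidef) {a b : ℝ} (ha : 0 < a) (hb : 0 < b) :
    LinearMap.ker (a • A + b • B).mulVecLin ≤ LinearMap.ker (A - B).mulVecLin := by
  intro x hx
  have hsum : a • (star x ⬝ᵥ (A *ᵥ x)) + b • (star x ⬝ᵥ (B *ᵥ x)) = 0 := by
    simpa [add_mulVec, smul_mulVec, dotProduct_add] using congrArg (star x ⬝ᵥ ·) hx
  obtain ⟨hAx, hBx⟩ := (add_eq_zero_iff_of_nonneg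
    (smul_nonneg ha.le (hA.dotProduct_mulVec_nonneg x))
    (smul_nonneg hb.le (hB.dotProduct_mulVec_nonneg x))).1 hsum
  have hA0 := (hA.dotProduct_mulVec_zero_iff x).1 ((smul_eq_zero.1 hAx).resolve_left ha.ne')
  have hB0 := (hB.dotProduct_mulVec_zero_iff x).1 ((smul_eq_zero.1 hBx).resolve_left hb.ne')
  simp [hA0, hB0]

theorem exists_norm_dotProduct_mulVec_le_of_diagonal {D : Matrix n n 𝕜} {lam : n → ℝ}
    (hlam : 0 ≤ lam) (hD : ∀ i j, D i j ≠ 0 → lam i ≠ 0 ∧ lam j ≠ 0) :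
    ∃ C, ∀ y : n → 𝕜, ‖star y ⬝ᵥ (D *ᵥ y)‖ ≤ C * ∑ k, lam k * ‖y k‖ ^ 2 := by
  -- `(lam i)⁻¹` is the junk value `0` when `lam i = 0`, but then row and column `i` of `D` vanish
  refine ⟨∑ i, ∑ j, ‖D i j‖ * ((lam i)⁻¹ + (lam j)⁻¹), fun y => ?_⟩
  set Q := ∑ k, lam k * ‖y k‖ ^ 2
  have hcoord : ∀ i, lam i ≠ 0 → ‖y i‖ ^ 2 ≤ (lam i)⁻¹ * Q := fun i hi => by
    rw [le_inv_mul_iff₀ (lt_of_le_of_ne (hlam i) (Ne.symm hi))]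
    exact Finset.single_le_sum (f := fun k => lam k * ‖y k‖ ^ 2)
      (fun k _ => mul_nonneg (hlam k) (sq_nonneg _)) (Finset.mem_univ i)
  have hentry : ∀ i j, ‖y i‖ * (‖D i j‖ * ‖y j‖) ≤ ‖D i j‖ * ((lam i)⁻¹ + (lam j)⁻¹) * Q := by
    intro i j
    by_cases hij : D i j = 0
    · simp [hij]
    obtain ⟨hi, hj⟩ := hD i j hij
    have := hcoord i hi
    have := hcoord j hj
    nlinarith [norm_nonneg (D i j), sq_nonneg (‖y i‖ - ‖y j‖)]
  calc ‖star y ⬝ᵥ (D *ᵥ y)‖ ≤ ∑ i, ‖y i‖ * ∑ j, ‖D i j‖ * ‖y j‖ := by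
        refine (norm_sum_le _ _).trans (Finset.sum_le_sum fun i _ => ?_)
        rw [norm_mul, Pi.star_apply, norm_star]
        gcongr
        exact (norm_sum_le _ _).trans_eq (by simp_rw [norm_mul])
    _ ≤ ∑ i, ∑ j, ‖D i j‖ * ((lam i)⁻¹ + (lam j)⁻¹) * Q := by
        simp_rw [Finset.mul_sum]
        exact Finset.sum_le_sum fun i _ => Finset.sum_le_sum fun j _ => hentry i j
    _ = _ := by simp_rw [Finset.sum_mul]

theorem star_dotProduct_mulVec_conj (U M : Matrix n n 𝕜) (y : n → 𝕜) :
    star (U *ᵥ y) ⬝ᵥ (M *ᵥ (U *ᵥ y)) = star y ⬝ᵥ ((star U * M * U) *ᵥ y) := by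
  rw [star_mulVec, ← dotProduct_mulVec, mulVec_mulVec, mulVec_mulVec, star_eq_conjTranspose]

variable [DecidableEq n]

theorem IsHermitian.range_mulVecLin_le_iff_ker_le {A B : Matrix n n 𝕜} (hA : A.IsHermitian)
    (hB : B.IsHermitian) :
    LinearMap.range A.mulVecLin ≤ LinearMap.range B.mulVecLin ↔
      LinearMap.ker B.mulVecLin ≤ LinearMap.ker A.mulVecLin := by
  set e := (WithLp.linearEquiv 2 𝕜 (n → 𝕜)).toLinearMap
  have he : Function.Injective e := (WithLp.linearEquiv 2 𝕜 (n → 𝕜)).injective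
  have hrange (M : Matrix n n 𝕜) :
      LinearMap.range M.mulVecLin = (LinearMap.range (toEuclideanLin M)).map e := by
    ext v
    simpa [e, toLpLin_apply] using
      ⟨fun ⟨y, h⟩ => ⟨WithLp.toLp 2 y, h⟩, fun ⟨y, h⟩ => ⟨y.ofLp, h⟩⟩
  have hker (M : Matrix n n 𝕜) :
      LinearMap.ker M.mulVecLin = (LinearMap.ker (toEuclideanLin M)).map e := by
    ext v
    simp [e, toLpLin_apply]
  rw [hrange, hrange, hker, hker, Submodule.map_le_map_iff_of_injective he,
    Submodule.map_le_map_iff_of_injective he]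
  exact (ContinuousLinearMap.ker_le_ker_iff_range_le_range
    (T := LinearMap.toContinuousLinearMap (toEuclideanLin A))
    (U := LinearMap.toContinuousLinearMap (toEuclideanLin B))
    (isSymmetric_toEuclideanLin_iff.2 hA) (isSymmetric_toEuclideanLin_iff.2 hB)).symm

theorem IsHermitian.posSemidef_of_re_dotProduct_mulVec_nonneg {A : Matrix n n 𝕜}
    (hA : A.IsHermitian) (h : ∀ x, 0 ≤ RCLike.re (star x ⬝ᵥ (A *ᵥ x))) : A.PosSemidef :=
  hA.posSemidef_iff_eigenvalues_nonneg.2 fun i => (hA.eigenvalues_eq i).symm ▸ h _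

theorem PosSemidef.exists_norm_dotProduct_mulVec_le {T D : Matrix n n 𝕜} (hT : T.PosSemidef)
    (hD : D.IsHermitian) (hker : LinearMap.ker T.mulVecLin ≤ LinearMap.ker D.mulVecLin) :
    ∃ C, ∀ x, ‖star x ⬝ᵥ (D *ᵥ x)‖ ≤ C * RCLike.re (star x ⬝ᵥ (T *ᵥ x)) := by
  set U : Matrix n n 𝕜 := ↑hT.1.eigenvectorUnitary
  set lam := hT.1.eigenvalues
  have hUU : U * star U = 1 := Unitary.mul_star_self_of_mem hT.1.eigenvectorUnitary.2
  have hdiag : star U * T * U = diagonal (RCLike.ofReal ∘ lam) := by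
    simpa [Unitary.conjStarAlgAut_apply] using hT.1.conjStarAlgAut_star_eigenvectorUnitary
  have hsupp : ∀ i j, (star U * D * U) i j ≠ 0 → lam i ≠ 0 ∧ lam j ≠ 0 := by
    have hcol : ∀ i j, lam j = 0 → (star U * D * U) i j = 0 := by
      intro i j hj
      have : D *ᵥ ⇑(hT.1.eigenvectorBasis j) = 0 := hker (by
        simp [hT.1.mulVec_eigenvectorBasis, show hT.1.eigenvalues j = 0 from hj])
      have hDU : ∀ k, (D * U) k j = 0 := fun k => by
        simpa [mul_apply, mulVec, dotProduct, U] using congrFun this k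
      rw [Matrix.mul_assoc, mul_apply]
      exact Finset.sum_eq_zero fun k _ => by rw [hDU, mul_zero]
    have hH : (star U * D * U).IsHermitian := by
      simpa [star_eq_conjTranspose] using isHermitian_conjTranspose_mul_mul U hD
    exact fun i j h => ⟨fun hi => h (by rw [← hH.apply, hcol j i hi, star_zero]),
      fun hj => h (hcol i j hj)⟩
  obtain ⟨C, hC⟩ := exists_norm_dotProduct_mulVec_le_of_diagonal
    (fun i => hT.eigenvalues_nonneg i) hsupp
  refine ⟨C, fun x => ?_⟩
  have hx : x = U *ᵥ (star U *ᵥ x) := by rw [mulVec_mulVec, hUU, one_mulVec]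
  generalize star U *ᵥ x = y at hx
  subst hx
  rw [star_dotProduct_mulVec_conj, star_dotProduct_mulVec_conj, hdiag]
  convert hC y using 2
  simp only [dotProduct, mulVec_diagonal, map_sum]
  refine Finset.sum_congr rfl fun k _ => ?_
  simp only [Pi.star_apply, RCLike.star_def, Function.comp_apply, RCLike.mul_re, RCLike.mul_im,
    RCLike.conj_re, RCLike.conj_im, RCLike.ofReal_re, RCLike.ofReal_im, RCLike.norm_sq_eq_def]
  ring

theorem PosSemidef.eventually_posSemidef_add_smul {T D : Matrix n n 𝕜} (hT : T.PosSemidef)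
    (hD : D.IsHermitian) (hker : LinearMap.ker T.mulVecLin ≤ LinearMap.ker D.mulVecLin) :
    ∀ᶠ c in 𝓝 (0 : ℝ), (T + c • D).PosSemidef := by
  obtain ⟨C, hC⟩ := hT.exists_norm_dotProduct_mulVec_le hD hker
  have hsmall : ∀ᶠ c in 𝓝 (0 : ℝ), |c| * C < 1 :=
    ((continuous_abs.mul continuous_const).tendsto' 0 0 (by simp)).eventually_lt_const one_pos
  filter_upwards [hsmall] with c hc
  refine (hT.1.add (hD.smul (IsSelfAdjoint.all c))).posSemidef_of_re_dotProduct_mulVec_nonneg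
    fun x => ?_
  rw [add_mulVec, dotProduct_add, smul_mulVec, dotProduct_smul, map_add, RCLike.smul_re]
  set q := RCLike.re (star x ⬝ᵥ (T *ᵥ x))
  set r := RCLike.re (star x ⬝ᵥ (D *ᵥ x))
  have hcr : |c * r| ≤ q := calc
    |c * r| = |c| * |r| := abs_mul c r
    _ ≤ |c| * (C * q) := by gcongr; exact (RCLike.abs_re_le_norm _).trans (hC x)
    _ = (|c| * C) * q := by ring
    _ ≤ q := mul_le_of_le_one_left (hT.re_dotProduct_nonneg x) hc.le
  linarith [neg_abs_le (c * r)]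

end Matrix

theorem eq_zero_of_mem_extremePoints_of_eventually_add_smul_mem {E : Type*} [AddCommGroup E]
    [Module ℝ E] {A : Set E} {x v : E} (hx : x ∈ A.extremePoints ℝ)
    (h : ∀ᶠ c in 𝓝 (0 : ℝ), x + c • v ∈ A) : v = 0 := by
  have hpm : ∀ᶠ c in 𝓝[≠] (0 : ℝ), (x + c • v ∈ A ∧ x + (-c) • v ∈ A) ∧ c ≠ 0 :=
    ((h.and ((continuous_neg.tendsto' 0 0 neg_zero).eventually h)).filter_mono
      nhdsWithin_le_nhds).and self_mem_nhdsWithin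
  obtain ⟨c, ⟨hplus, hminus⟩, hc⟩ := hpm.exists
  rw [neg_smul, ← sub_eq_add_neg] at hminus
  have := (mem_extremePoints.1 hx).2 _ hplus _ hminus (mem_openSegment_add_sub x (c • v))
  simpa [hc] using this.1

section Comb

variable {d : ℕ → ℕ} {m : ℕ}

noncomputable def ptrTopLin : CombMat d (m + 1) →ₗ[ℝ] CombMat d m where
  toFun := ptrTop
  map_add' A B := by ext; simp [ptrTop, Finset.sum_add_distrib]
  map_smul' c A := by ext; simp [ptrTop, Finset.smul_sum]

noncomputable def tensTopLin : CombMat d m →ₗ[ℝ] CombMat d (m + 1) where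
  toFun := tensTop
  map_add' A B := by ext; simp [tensTop, mul_add]
  map_smul' c A := by ext; simp [tensTop]

/-- The solutions of the homogeneous normalisation conditions of `IsDetComb`, where `X^(0) = 0`
replaces `R^(0) = 1`. -/
noncomputable def combTangentSpace (d : ℕ → ℕ) : (n : ℕ) → Submodule ℝ (CombMat d (2 * n))
  | 0 => ⊥
  | n + 1 => ((combTangentSpace d n).map tensTopLin).comap (ptrTopLin (m := 2 * n + 1))

theorem sub_mem_combTangentSpace : ∀ {n : ℕ} {R R' : CombMat d (2 * n)},
    IsDetComb d n R → IsDetComb d n R' → R - R' ∈ combTangentSpace d n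
  | 0, _, _, hR, hR' => by simp [combTangentSpace, show _ = _ from hR, show _ = _ from hR']
  | n + 1, _, _, ⟨_, S, hS, hRS⟩, ⟨_, S', hS', hRS'⟩ =>
    ⟨S - S', sub_mem_combTangentSpace hS hS', by
      simp [ptrTopLin, tensTopLin, map_sub, hRS, hRS']⟩

theorem span_sub_detComb_le_combTangentSpace (n : ℕ) :
    Submodule.span ℝ {X : CombMat d (2 * n) | ∃ R R' : CombMat d (2 * n),
      IsDetComb d n R ∧ IsDetComb d n R' ∧ X = R - R'} ≤ combTangentSpace d n :=
  Submodule.span_le.2 fun _ ⟨_, _, hR, hR', hX⟩ => hX ▸ sub_mem_combTangentSpace hR hR'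

theorem ptrTop_eq_sum_submatrix (A : CombMat d (m + 1)) :
    ptrTop A = ∑ t, A.submatrix (Fin.snoc · t) (Fin.snoc · t) := by
  ext i j
  simp [ptrTop, Matrix.sum_apply]

theorem Matrix.PosSemidef.ptrTop {A : CombMat d (m + 1)} (hA : A.PosSemidef) :
    (ptrTop A).PosSemidef := by
  rw [ptrTop_eq_sum_submatrix]
  exact posSemidef_sum _ fun t _ => hA.submatrix _

theorem tensTop_submatrix (B : CombMat d m) (t : Fin (d m)) :
    (tensTop B).submatrix (Fin.snoc · t) (Fin.snoc · t) = B := by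
  ext i j
  simp [tensTop]

theorem Matrix.PosSemidef.of_tensTop [Nonempty (Fin (d m))] {B : CombMat d m}
    (hB : (tensTop B).PosSemidef) : B.PosSemidef :=
  tensTop_submatrix B (Classical.arbitrary _) ▸ hB.submatrix _

theorem IsDetComb.add_of_mem_combTangentSpace : ∀ {n : ℕ} {R X : CombMat d (2 * n)},
    IsDetComb d n R → X ∈ combTangentSpace d n → (R + X).PosSemidef → IsDetComb d n (R + X)
  | 0, _, _, hR, hX, _ => by
    simpa [IsDetComb, combTangentSpace, show _ = _ from hX] using hR
  | n + 1, R, X, ⟨_, S, hS, hRS⟩, ⟨X', hX', hXX'⟩, hRX => by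
    have hptr : ptrTop (R + X) = tensTop (S + X') := by
      change ptrTopLin (R + X) = tensTopLin (S + X')
      rw [map_add, map_add, ← hXX']
      exact congrArg (· + _) hRS
    refine ⟨hRX, ?_⟩
    cases isEmpty_or_nonempty (Fin (d (2 * n)))
    · -- `ℋ_{2n}` is zero-dimensional, so all operators on `ℋ_{2n} ⊗ ⋯ ⊗ ℋ₀` coincide
      have : IsEmpty (∀ k : Fin (2 * n + 1), Fin (d k)) :=
        ⟨fun i => isEmptyElim (α := Fin (d (2 * n))) (i (Fin.last _))⟩
      exact ⟨S, hS, Subsingleton.elim _ _⟩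
    · exact ⟨S + X', add_of_mem_combTangentSpace hS hX' (hptr ▸ hRX.ptrTop).of_tensTop, hptr⟩

theorem IsGQI.add_smul {N M : ℕ} {T D : Fin M → CombMat d (2 * N)} (hT : IsGQI d N M T)
    (hD : ∑ i, D i ∈ combTangentSpace d N) {c : ℝ} (hc : ∀ i, (T i + c • D i).PosSemidef) :
    IsGQI d N M (T + c • D) := by
  have hsum : ∑ i, (T + c • D) i = ∑ i, T i + c • ∑ i, D i := by
    simp [Finset.sum_add_distrib, Finset.smul_sum]
  refine ⟨hc, hsum ▸ hT.2.add_of_mem_combTangentSpace ((combTangentSpace d N).smul_mem c hD) ?_⟩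
  exact hsum ▸ posSemidef_sum _ fun i _ => hc i

end Comb

theorem stmt_0 (d : ℕ → ℕ) (N M : ℕ) (T : Fin M → CombMat d (2 * N))
    (hT : IsGQI d N M T) :
    T ∈ {W | IsGQI d N M W}.extremePoints ℝ ↔
      ∀ D : Fin M → CombMat d (2 * N),
        (∀ i, (D i).IsHermitian) →
        (∀ i, LinearMap.range (D i).mulVecLin ≤ LinearMap.range (T i).mulVecLin) →
        (∑ i, D i) ∈ Submodule.span ℝ
          {X : CombMat d (2 * N) | ∃ R R' : CombMat d (2 * N),
            IsDetComb d N R ∧ IsDetComb d N R' ∧ X = R - R'} →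
        ∀ i, D i = 0 := by
  constructor
  · intro hext D hD hrange hsum
    refine congrFun (eq_zero_of_mem_extremePoints_of_eventually_add_smul_mem hext ?_)
    filter_upwards [eventually_all.2 fun i => (hT.1 i).eventually_posSemidef_add_smul (hD i)
      (((hD i).range_mulVecLin_le_iff_ker_le (hT.1 i).1).1 (hrange i))] with c hc
    exact hT.add_smul (span_sub_detComb_le_combTangentSpace N hsum) hc
  · intro hcond
    refine mem_extremePoints.2 ⟨hT, fun y hy z hz ⟨a, b, ha, hb, hab, hyzT⟩ => ?_⟩
    have hyz : y = z := funext fun i => sub_eq_zero.1 <| hcond (y - z)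
      (fun i => (hy.1 i).1.sub (hz.1 i).1)
      (fun i => ((hy.1 i).1.sub (hz.1 i).1).range_mulVecLin_le_iff_ker_le (hT.1 i).1 |>.2 <| by
        rw [← hyzT]
        exact (hy.1 i).ker_smul_add_smul_le_ker_sub (hz.1 i) ha hb)
      (Submodule.subset_span ⟨_, _, hy.2, hz.2, by simp [Finset.sum_sub_distrib]⟩) i
    subst hyz
    rw [← add_smul, hab, one_smul] at hyzT
    exact ⟨hyzT, hyzT⟩
end

section
/- If {T_i}_{i=1}^M is an extremal quantum 1-tester on ℋ₂⊗ℋ₁ with T_i ≠ 0 for every i, then M ≤ d₁²(d₂² − 1) + 1. -/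
open Matrix Kronecker
open scoped ComplexOrder

/-- A quantum 1-tester with `M` outcomes on `ℋ₂ ⊗ ℋ₁`: a family of positive semidefinite
operators summing to `I₂ ⊗ ρ` for some density operator `ρ` on `ℋ₁`. -/
def IsTester (d₂ d₁ M : ℕ)
    (T : Fin M → Matrix (Fin d₂ × Fin d₁) (Fin d₂ × Fin d₁) ℂ) : Prop :=
  (∀ i, (T i).PosSemidef) ∧
    ∃ ρ : Matrix (Fin d₁) (Fin d₁) ℂ, ρ.PosSemidef ∧ ρ.trace = 1 ∧
      ∑ i, T i = (1 : Matrix (Fin d₂) (Fin d₂) ℂ) ⊗ₖ ρ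

/-!
If there were more than `d₁²(d₂² - 1) + 1` outcomes, the linear map
`(c, σ) ↦ (∑ cᵢ Tᵢ - I₂ ⊗ σ, tr σ)` from `ℂᴹ × M_{d₁}(ℂ)` to `M_{d₂d₁}(ℂ) × ℂ` would have a
nonzero kernel, giving `c ≠ 0` with `∑ cᵢ Tᵢ = I₂ ⊗ σ` and `tr σ = 0`. Since the `Tᵢ` are
Hermitian, `c` may be taken real with `|cᵢ| ≤ 1`, and then `((1 ± cᵢ) Tᵢ)ᵢ` are two testers
whose midpoint is `T`. Extremality forces `cᵢ Tᵢ = 0` for all `i`, contradicting `Tᵢ ≠ 0`.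
-/

theorem eq_zero_of_add_mem_of_sub_mem_of_mem_extremePoints {𝕜 E : Type*} [Field 𝕜]
    [LinearOrder 𝕜] [IsStrictOrderedRing 𝕜] [AddCommGroup E] [Module 𝕜 E] {A : Set E}
    {x y : E} (hx : x ∈ A.extremePoints 𝕜) (hadd : x + y ∈ A) (hsub : x - y ∈ A) : y = 0 :=
  have : Invertible (2 : 𝕜) := invertibleOfNonzero two_ne_zero
  add_eq_left.1 (hx.2 hadd hsub (mem_openSegment_add_sub x y))

namespace Matrix

variable {m n : Type*}

theorem submatrix_one_kronecker {α : Type*} [MulZeroOneClass α] [DecidableEq m] (i : m)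
    (σ : Matrix n n α) : ((1 : Matrix m m α) ⊗ₖ σ).submatrix (i, ·) (i, ·) = σ := by
  ext a b
  simp

theorem PosSemidef.of_one_kronecker {R : Type*} [CommRing R] [PartialOrder R] [StarRing R]
    [DecidableEq m] [Nonempty m] {σ : Matrix n n R}
    (h : ((1 : Matrix m m R) ⊗ₖ σ).PosSemidef) : σ.PosSemidef := by
  simpa only [submatrix_one_kronecker] using h.submatrix (Classical.arbitrary m, ·)

theorem conjTranspose_sum_smul_of_isHermitian {ι α : Type*} [Fintype ι] [CommRing α]
    [StarRing α] {T : ι → Matrix n n α} (hT : ∀ i, (T i).IsHermitian) (c : ι → α) :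
    (∑ i, c i • T i)ᴴ = ∑ i, star (c i) • T i := by
  simp only [conjTranspose_sum, conjTranspose_smul, (hT _).eq]

theorem sum_re_smul_of_isHermitian {ι : Type*} [Fintype ι] {T : ι → Matrix n n ℂ}
    (hT : ∀ i, (T i).IsHermitian) (c : ι → ℂ) :
    ∑ i, (c i).re • T i = (2⁻¹ : ℂ) • (∑ i, c i • T i + (∑ i, c i • T i)ᴴ) := by
  rw [conjTranspose_sum_smul_of_isHermitian hT, ← Finset.sum_add_distrib, Finset.smul_sum]
  refine Finset.sum_congr rfl fun i _ => ?_
  rw [← add_smul, smul_smul, ← Complex.coe_smul, Complex.re_eq_add_conj, div_eq_inv_mul]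
  rfl

variable [Fintype n]

theorem exists_sum_smul_eq_one_kronecker_of_card_lt {K ι : Type*} [Field K] [Fintype ι]
    [Fintype m] [DecidableEq m] [Nonempty m] (T : ι → Matrix (m × n) (m × n) K)
    (h : (Fintype.card m * Fintype.card n) ^ 2 + 1 < Fintype.card ι + Fintype.card n ^ 2) :
    ∃ c : ι → K, c ≠ 0 ∧ ∃ σ : Matrix n n K, σ.trace = 0 ∧ ∑ i, c i • T i = 1 ⊗ₖ σ := by
  let L : (ι → K) × Matrix n n K →ₗ[K] Matrix (m × n) (m × n) K × K :=
    (Fintype.linearCombination K T ∘ₗ LinearMap.fst K _ _ -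
        kroneckerBilinear (R := K) (1 : Matrix m m K) ∘ₗ LinearMap.snd K _ _).prod
      (traceLinearMap n K K ∘ₗ LinearMap.snd K _ _)
  have hker : LinearMap.ker L ≠ ⊥ := LinearMap.ker_ne_bot_of_finrank_lt <| by
    simp only [Module.finrank_prod, Module.finrank_pi, Module.finrank_matrix,
      Module.finrank_self, Fintype.card_prod]
    linarith
  obtain ⟨⟨c, σ⟩, hcσ, hne⟩ := Submodule.exists_mem_ne_zero_of_ne_bot hker
  have hkron (σ : Matrix n n K) : kroneckerBilinear (R := K) (1 : Matrix m m K) σ = 1 ⊗ₖ σ := rfl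
  simp only [L, LinearMap.ker_prod, Submodule.mem_inf, LinearMap.mem_ker, LinearMap.sub_apply,
    LinearMap.coe_comp, LinearMap.coe_fst, LinearMap.coe_snd, Function.comp_apply,
    Fintype.linearCombination_apply, hkron, traceLinearMap_apply, sub_eq_zero] at hcσ
  refine ⟨c, ?_, σ, hcσ.2, hcσ.1⟩
  rintro rfl
  have hσ : σ = 0 := by
    simpa only [submatrix_one_kronecker, Pi.zero_apply, zero_smul, Finset.sum_const_zero,
      submatrix_zero] using (congrArg (submatrix · (Classical.arbitrary m, ·)
        (Classical.arbitrary m, ·)) hcσ.1).symm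
  exact hne (by simp [hσ])

theorem exists_real_sum_smul_eq_one_kronecker {ι : Type*} [Fintype ι] [DecidableEq m]
    {T : ι → Matrix (m × n) (m × n) ℂ} (hT : ∀ i, (T i).IsHermitian) {c : ι → ℂ} (hc : c ≠ 0)
    {σ : Matrix n n ℂ} (hσ : σ.trace = 0) (hsum : ∑ i, c i • T i = 1 ⊗ₖ σ) :
    ∃ a : ι → ℝ, a ≠ 0 ∧ (∀ i, |a i| ≤ 1) ∧
      ∃ τ : Matrix n n ℂ, τ.trace = 0 ∧ ∑ i, a i • T i = 1 ⊗ₖ τ := by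
  obtain ⟨j, hj⟩ := Function.ne_iff.mp hc
  have : Nonempty ι := ⟨j⟩
  -- dividing by a coefficient of maximal modulus makes that coefficient `1` and all others small
  obtain ⟨i₀, hi₀⟩ := Finite.exists_max (‖c ·‖)
  have hci₀ : c i₀ ≠ 0 := norm_pos_iff.1 ((norm_pos_iff.2 hj).trans_le (hi₀ j))
  set b : ι → ℂ := (c i₀)⁻¹ • c with hb
  set σ' : Matrix n n ℂ := (c i₀)⁻¹ • σ
  have hsum' : ∑ i, b i • T i = 1 ⊗ₖ σ' := by
    simp only [hb, Pi.smul_apply, smul_eq_mul, ← smul_smul, ← Finset.smul_sum, hsum, σ',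
      kronecker_smul]
  refine ⟨fun i => (b i).re, Function.ne_iff.2 ⟨i₀, ?_⟩, fun i => ?_,
    (2⁻¹ : ℂ) • (σ' + σ'ᴴ), ?_, ?_⟩
  · simp [hb, hci₀]
  · calc |(b i).re| ≤ ‖b i‖ := Complex.abs_re_le_norm _
      _ = ‖c i‖ / ‖c i₀‖ := by simp [hb, norm_inv, div_eq_inv_mul]
      _ ≤ 1 := div_le_one_of_le₀ (hi₀ i) (norm_nonneg _)
  · simp [σ', trace_conjTranspose, hσ]
  · rw [sum_re_smul_of_isHermitian hT, hsum', conjTranspose_kronecker, conjTranspose_one,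
      ← kronecker_add, ← kronecker_smul]

end Matrix

section IsTester

variable {d₂ d₁ M : ℕ} [NeZero d₂] {T : Fin M → Matrix (Fin d₂ × Fin d₁) (Fin d₂ × Fin d₁) ℂ}
  {a : Fin M → ℝ} {τ : Matrix (Fin d₁) (Fin d₁) ℂ}

theorem IsTester.add_smul_self (hT : IsTester d₂ d₁ M T) (ha : ∀ i, -1 ≤ a i)
    (hτ : τ.trace = 0) (hsum : ∑ i, a i • T i = 1 ⊗ₖ τ) :
    IsTester d₂ d₁ M (T + fun i => a i • T i) := by
  obtain ⟨hpsd, ρ, hρ, hρtr, hρsum⟩ := hT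
  have hpsd' (i : Fin M) : (T i + a i • T i).PosSemidef := by
    rw [show T i + a i • T i = (1 + a i) • T i by rw [add_smul, one_smul]]
    exact (hpsd i).smul (by linarith [ha i])
  have hsum' : ∑ i, (T i + a i • T i) = 1 ⊗ₖ (ρ + τ) := by
    rw [Finset.sum_add_distrib, hρsum, hsum, kronecker_add]
  refine ⟨hpsd', ρ + τ, ?_, by rw [trace_add, hρtr, hτ, add_zero], hsum'⟩
  exact PosSemidef.of_one_kronecker (hsum' ▸ posSemidef_sum _ fun i _ => hpsd' i)

theorem IsTester.sub_smul_self (hT : IsTester d₂ d₁ M T) (ha : ∀ i, a i ≤ 1)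
    (hτ : τ.trace = 0) (hsum : ∑ i, a i • T i = 1 ⊗ₖ τ) :
    IsTester d₂ d₁ M (T - fun i => a i • T i) := by
  have hneg : ∑ i, (-a) i • T i = 1 ⊗ₖ (-τ) := by
    simp only [Pi.neg_apply, neg_smul, Finset.sum_neg_distrib, hsum]
    rw [← neg_one_smul ℂ τ, kronecker_smul, neg_one_smul]
  convert hT.add_smul_self (fun i => neg_le_neg (ha i)) (by rw [trace_neg, hτ, neg_zero]) hneg
    using 1
  funext i
  simp only [Pi.sub_apply, Pi.add_apply, neg_smul, sub_eq_add_neg]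

end IsTester

theorem stmt_5 {d₁ d₂ M : ℕ} (T : Fin M → Matrix (Fin d₂ × Fin d₁) (Fin d₂ × Fin d₁) ℂ)
    (hT : IsTester d₂ d₁ M T)
    (hext : T ∈ {W | IsTester d₂ d₁ M W}.extremePoints ℝ)
    (hne : ∀ i, T i ≠ 0) :
    M ≤ d₁ ^ 2 * (d₂ ^ 2 - 1) + 1 := by
  by_contra! hM
  have : NeZero d₂ := ⟨by
    rintro rfl
    exact hne ⟨0, by omega⟩ (Matrix.ext fun p => p.1.elim0)⟩
  have hcard : (d₂ * d₁) ^ 2 + 1 < M + d₁ ^ 2 := by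
    have : d₁ ^ 2 ≤ d₁ ^ 2 * d₂ ^ 2 := Nat.le_mul_of_pos_right _ (pow_pos (Nat.pos_of_neZero d₂) 2)
    rw [Nat.mul_sub_one] at hM
    rw [mul_pow, mul_comm]
    omega
  obtain ⟨c, hc, σ, hσ, hsum⟩ := exists_sum_smul_eq_one_kronecker_of_card_lt T
    (by simpa only [Fintype.card_fin] using hcard)
  obtain ⟨a, ha, ha_le, τ, hτ, hasum⟩ :=
    exists_real_sum_smul_eq_one_kronecker (fun i => (hT.1 i).1) hc hσ hsum
  have hy : (fun i => a i • T i) = 0 := eq_zero_of_add_mem_of_sub_mem_of_mem_extremePoints hext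
    (hT.add_smul_self (fun i => (abs_le.1 (ha_le i)).1) hτ hasum)
    (hT.sub_smul_self (fun i => (abs_le.1 (ha_le i)).2) hτ hasum)
  obtain ⟨i, hi⟩ := Function.ne_iff.1 ha
  exact hne i ((smul_eq_zero.1 (congrFun hy i)).resolve_left hi)
end

section
/- Let ρ be a full-rank density operator on ℋ₁, let U be a unitary on ℋ₁, and let {T_i}_{i=1}^M be a quantum 1-tester on ℋ₂⊗ℋ₁ with normalization ∑_{i=1}^M T_i = (1/d₁) I₂⊗I₁. Define T′_i = d₁ (I₂⊗√ρ U) T_i (I₂⊗U†√ρ). Then {T′_i}_{i=1}^M is a quantum 1-tester with normalization ∑_{i=1}^M T′_i = I₂⊗ρ, and {T′_i}_{i=1}^M is extremal if and only if {T_i}_{i=1}^M is extremal. -/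
open Matrix Kronecker
open scoped ComplexOrder

/-- The positive semidefinite square root, as `Matrix.PosSemidef.sqrt` was defined in older Mathlib. -/
noncomputable def Matrix.PosSemidef.sqrt {n 𝕜 : Type*} [Fintype n] [DecidableEq n] [RCLike 𝕜]
    {A : Matrix n n 𝕜} (hA : A.PosSemidef) : Matrix n n 𝕜 :=
  hA.1.eigenvectorUnitary.1 * diagonal ((↑) ∘ (√·) ∘ hA.1.eigenvalues) *
  (star hA.1.eigenvectorUnitary : Matrix n n 𝕜)

/-!
For invertible `B` and `c > 0`, the map `W ↦ c • (1 ⊗ B) W (1 ⊗ B)ᴴ` is a linear automorphism of the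
cone of unnormalised testers (positive semidefinite families summing to `1 ⊗ σ` with `σ ⪰ 0`).
The testers form the base of this cone cut out by the functional `re tr (∑ W) / d₂`, which is
positive on every nonzero element of the cone. An automorphism of a cone need not preserve the base,
but once each image is rescaled back onto the base it respects convex decompositions, so it maps
extreme points to extreme points, and so does its inverse. With `B = √ρ U` (invertible since `ρ`
has full rank) and `c = d₁` it sends `T` to the tester `T'`.
-/

namespace Matrix.PosSemidef

open scoped MatrixOrder

variable {n 𝕜 : Type*} [Fintype n] [DecidableEq n] [RCLike 𝕜] {A : Matrix n n 𝕜}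

theorem sqrt_eq_CFC_sqrt (hA : A.PosSemidef) : hA.sqrt = CFC.sqrt A := by
  rw [CFC.sqrt_eq_real_sqrt A hA.nonneg, cfcₙ_eq_cfc, hA.1.cfc_eq]
  rfl

theorem sqrt_mul_sqrt (hA : A.PosSemidef) : hA.sqrt * hA.sqrt = A := by
  rw [sqrt_eq_CFC_sqrt, CFC.sqrt_mul_sqrt_self A hA.nonneg]

theorem conjTranspose_sqrt (hA : A.PosSemidef) : hA.sqrtᴴ = hA.sqrt := by
  rw [sqrt_eq_CFC_sqrt]
  exact (CFC.sqrt_nonneg A).isSelfAdjoint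

theorem isUnit_sqrt (hA : A.PosSemidef) (h : IsUnit A) : IsUnit hA.sqrt := by
  rw [← hA.sqrt_mul_sqrt] at h
  exact isUnit_of_mul_isUnit_left h

end Matrix.PosSemidef

theorem Matrix.isUnit_of_rank_eq_card {K n : Type*} [Field K] [Fintype n] [DecidableEq n]
    {A : Matrix n n K} (h : A.rank = Fintype.card n) : IsUnit A := by
  rw [← mulVec_injective_iff_isUnit, ← coe_mulVecLin, LinearMap.injective_iff_surjective,
    ← LinearMap.range_eq_top]
  exact Submodule.eq_top_of_finrank_eq (by simpa [Matrix.rank] using h)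

section ConeBase

variable {E : Type*} [AddCommGroup E] [Module ℝ E] {C : Set E} {φ : E →ₗ[ℝ] ℝ}

theorem LinearEquiv.apply_mem_extremePoints_of_mapsTo_symm
    (hC : ∀ t : ℝ, 0 < t → ∀ x ∈ C, t • x ∈ C) (hφ : ∀ x ∈ C, x ≠ 0 → 0 < φ x)
    (L : E ≃ₗ[ℝ] E) (hL : Set.MapsTo L.symm C C) {x : E}
    (hx : x ∈ {y ∈ C | φ y = 1}.extremePoints ℝ) (hLx : L x ∈ {y ∈ C | φ y = 1}) :
    L x ∈ {y ∈ C | φ y = 1}.extremePoints ℝ := by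
  have pull : ∀ y ∈ {y ∈ C | φ y = 1}, ∃ s : ℝ, 0 < s ∧ ∃ u ∈ {y ∈ C | φ y = 1},
      L.symm y = s • u := by
    rintro y ⟨hyC, hy1⟩
    have hs : 0 < φ (L.symm y) :=
      hφ _ (hL hyC) (by rintro h; simp [L.symm_apply_eq.1 h] at hy1)
    refine ⟨_, hs, _, ⟨hC _ (inv_pos.2 hs) _ (hL hyC), by simp [hs.ne']⟩, ?_⟩
    rw [smul_smul, mul_inv_cancel₀ hs.ne', one_smul]
  have push : ∀ y ∈ {y ∈ C | φ y = 1}, ∀ s : ℝ, L.symm y = s • x → y = L x := by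
    rintro y ⟨-, hy1⟩ s hys
    rw [L.symm_apply_eq, map_smul] at hys
    have hs1 : s = 1 := by simpa [hy1, hLx.2] using (congrArg φ hys).symm
    rw [hys, hs1, one_smul]
  refine mem_extremePoints.2 ⟨hLx, fun y hy z hz ⟨a, b, ha, hb, hab, hyz⟩ => ?_⟩
  obtain ⟨s, hs, u, hu, hyu⟩ := pull y hy
  obtain ⟨t, ht, v, hv, hzv⟩ := pull z hz
  have hx_eq : (a * s) • u + (b * t) • v = x := by
    rw [mul_smul, mul_smul, ← hyu, ← hzv, ← map_smul, ← map_smul, ← map_add, hyz,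
      L.symm_apply_apply]
  have hst : a * s + b * t = 1 := by
    simpa [hu.2, hv.2, hx.1.2] using congrArg φ hx_eq
  obtain ⟨rfl, rfl⟩ := (mem_extremePoints.1 hx).2 _ hu _ hv
    ⟨a * s, b * t, by positivity, by positivity, hst, hx_eq⟩
  exact ⟨push y hy s hyu, push z hz t hzv⟩

theorem LinearEquiv.apply_mem_extremePoints_iff
    (hC : ∀ t : ℝ, 0 < t → ∀ x ∈ C, t • x ∈ C) (hφ : ∀ x ∈ C, x ≠ 0 → 0 < φ x)
    (L : E ≃ₗ[ℝ] E) (hL : Set.MapsTo L C C) (hL' : Set.MapsTo L.symm C C) {x : E}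
    (hx : x ∈ {y ∈ C | φ y = 1}) (hLx : L x ∈ {y ∈ C | φ y = 1}) :
    L x ∈ {y ∈ C | φ y = 1}.extremePoints ℝ ↔ x ∈ {y ∈ C | φ y = 1}.extremePoints ℝ := by
  refine ⟨fun h => ?_, fun h => L.apply_mem_extremePoints_of_mapsTo_symm hC hφ hL' h hLx⟩
  simpa using L.symm.apply_mem_extremePoints_of_mapsTo_symm hC hφ hL h (by simpa using hx)

end ConeBase

section KronConj

variable {ι m n : Type*} [Fintype m] [Fintype n] [DecidableEq m]

theorem one_kronecker_mul_one_kronecker_mul (B σ C : Matrix n n ℂ) :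
    ((1 : Matrix m m ℂ) ⊗ₖ B) * ((1 : Matrix m m ℂ) ⊗ₖ σ) * ((1 : Matrix m m ℂ) ⊗ₖ C) =
      (1 : Matrix m m ℂ) ⊗ₖ (B * σ * C) := by
  rw [← mul_kronecker_mul, ← mul_kronecker_mul, one_mul, one_mul]

variable (ι m) in
noncomputable def kronConj (c : ℝ) (B : Matrix n n ℂ) :
    (ι → Matrix (m × n) (m × n) ℂ) →ₗ[ℝ] (ι → Matrix (m × n) (m × n) ℂ) where
  toFun W i := c • (((1 : Matrix m m ℂ) ⊗ₖ B) * W i * ((1 : Matrix m m ℂ) ⊗ₖ Bᴴ))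
  map_add' W V := by ext1 i; simp [Matrix.mul_add, Matrix.add_mul]
  map_smul' t W := by ext1 i; simp [smul_comm c t]

theorem kronConj_apply (c : ℝ) (B : Matrix n n ℂ) (W : ι → Matrix (m × n) (m × n) ℂ) (i : ι) :
    kronConj ι m c B W i =
      c • (((1 : Matrix m m ℂ) ⊗ₖ B) * W i * ((1 : Matrix m m ℂ) ⊗ₖ Bᴴ)) :=
  rfl

theorem kronConj_comp (c c' : ℝ) (B B' : Matrix n n ℂ) :
    kronConj ι m c B ∘ₗ kronConj ι m c' B' = kronConj ι m (c * c') (B * B') := by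
  ext W i : 2
  simp only [LinearMap.comp_apply, kronConj_apply, Matrix.mul_smul, Matrix.smul_mul, smul_smul,
    conjTranspose_mul]
  rw [← one_mul (1 : Matrix m m ℂ), mul_kronecker_mul, mul_kronecker_mul, one_mul]
  simp only [Matrix.mul_assoc]

variable [DecidableEq n]

theorem kronConj_one_one : kronConj ι m (1 : ℝ) (1 : Matrix n n ℂ) = LinearMap.id := by
  ext W i : 2
  simp [kronConj_apply]

variable (ι m) in
noncomputable def kronConjEquiv {c : ℝ} (hc : c ≠ 0) {B : Matrix n n ℂ} (hB : IsUnit B) :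
    (ι → Matrix (m × n) (m × n) ℂ) ≃ₗ[ℝ] (ι → Matrix (m × n) (m × n) ℂ) :=
  have hB' := (isUnit_iff_isUnit_det B).1 hB
  LinearEquiv.ofLinearMap (kronConj ι m c B) (kronConj ι m c⁻¹ B⁻¹)
    (by rw [kronConj_comp, mul_inv_cancel₀ hc, mul_nonsing_inv B hB', kronConj_one_one])
    (by rw [kronConj_comp, inv_mul_cancel₀ hc, nonsing_inv_mul B hB', kronConj_one_one])

end KronConj

section TesterTrace

variable {ι m n : Type*} [Fintype ι] [Fintype m] [Fintype n]

variable (ι m n) in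
noncomputable def testerTrace : (ι → Matrix (m × n) (m × n) ℂ) →ₗ[ℝ] ℝ where
  toFun W := (∑ i, W i).trace.re / Fintype.card m
  map_add' W V := by simp [Finset.sum_add_distrib, add_div]
  map_smul' t W := by simp [← Finset.smul_sum, mul_div_assoc]

theorem testerTrace_apply (W : ι → Matrix (m × n) (m × n) ℂ) :
    testerTrace ι m n W = (∑ i, W i).trace.re / Fintype.card m :=
  rfl

end TesterTrace

section TesterCone

variable {ι m n : Type*} [Fintype ι] [DecidableEq m]

variable (ι m n) in
def testerCone : Set (ι → Matrix (m × n) (m × n) ℂ) :=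
  {W | (∀ i, (W i).PosSemidef) ∧
    ∃ σ : Matrix n n ℂ, σ.PosSemidef ∧ ∑ i, W i = (1 : Matrix m m ℂ) ⊗ₖ σ}

theorem smul_mem_testerCone {t : ℝ} (ht : 0 ≤ t) {W : ι → Matrix (m × n) (m × n) ℂ}
    (hW : W ∈ testerCone ι m n) : t • W ∈ testerCone ι m n := by
  obtain ⟨hpsd, σ, hσ, hsum⟩ := hW
  refine ⟨fun i => (hpsd i).smul ht, t • σ, hσ.smul ht, ?_⟩
  simp [← Finset.smul_sum, hsum, kronecker_smul]

variable [Fintype m] [Fintype n]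

theorem testerTrace_pos [Nonempty m] {W : ι → Matrix (m × n) (m × n) ℂ}
    (hW : W ∈ testerCone ι m n) (hW0 : W ≠ 0) : 0 < testerTrace ι m n W := by
  obtain ⟨i, hi⟩ := Function.ne_iff.1 hW0
  have hre : ∀ j, 0 ≤ (W j).trace.re := fun j => (Complex.nonneg_iff.1 (hW.1 j).trace_nonneg).1
  have hi_pos : 0 < (W i).trace.re := by
    refine lt_of_le_of_ne (hre i) fun h => hi ((hW.1 i).trace_eq_zero_iff.1 ?_)
    rw [Complex.eq_re_of_ofReal_le (hW.1 i).trace_nonneg, ← h, Complex.ofReal_zero]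
  have hsum_pos : 0 < (∑ j, W j).trace.re := by
    rw [trace_sum, Complex.re_sum]
    exact Finset.sum_pos' (fun j _ => hre j) ⟨i, Finset.mem_univ i, hi_pos⟩
  exact div_pos hsum_pos (by exact_mod_cast Fintype.card_pos)

theorem sum_kronConj_of_sum_eq {c : ℝ} {B σ : Matrix n n ℂ} {W : ι → Matrix (m × n) (m × n) ℂ}
    (hW : ∑ i, W i = (1 : Matrix m m ℂ) ⊗ₖ σ) :
    ∑ i, kronConj ι m c B W i = (1 : Matrix m m ℂ) ⊗ₖ (c • (B * σ * Bᴴ)) := by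
  simp only [kronConj_apply, ← Finset.smul_sum, ← Finset.mul_sum, ← Finset.sum_mul, hW,
    one_kronecker_mul_one_kronecker_mul, kronecker_smul]

theorem sum_kronConj_of_sum_eq_inv_smul_one [DecidableEq n] {c : ℝ} (hc : c ≠ 0)
    {B : Matrix n n ℂ} {W : ι → Matrix (m × n) (m × n) ℂ}
    (hW : ∑ i, W i = (1 : Matrix m m ℂ) ⊗ₖ ((c : ℂ)⁻¹ • (1 : Matrix n n ℂ))) :
    ∑ i, kronConj ι m c B W i = (1 : Matrix m m ℂ) ⊗ₖ (B * Bᴴ) := by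
  rw [sum_kronConj_of_sum_eq hW, Matrix.mul_smul, Matrix.mul_one, Matrix.smul_mul, ← smul_assoc,
    Complex.real_smul, mul_inv_cancel₀ (Complex.ofReal_ne_zero.2 hc), one_smul]

theorem kronConj_mapsTo {c : ℝ} (hc : 0 ≤ c) (B : Matrix n n ℂ) :
    Set.MapsTo (kronConj ι m c B) (testerCone ι m n) (testerCone ι m n) := by
  rintro W ⟨hpsd, σ, hσ, hsum⟩
  refine ⟨fun i => ?_, _, (hσ.mul_mul_conjTranspose_same B).smul hc, sum_kronConj_of_sum_eq hsum⟩
  have h := (hpsd i).mul_mul_conjTranspose_same ((1 : Matrix m m ℂ) ⊗ₖ B)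
  rw [conjTranspose_kronecker, conjTranspose_one] at h
  exact h.smul hc

end TesterCone

theorem IsTester.mem_testerCone {d₂ d₁ M : ℕ}
    {T : Fin M → Matrix (Fin d₂ × Fin d₁) (Fin d₂ × Fin d₁) ℂ} (hT : IsTester d₂ d₁ M T) :
    T ∈ testerCone (Fin M) (Fin d₂) (Fin d₁) :=
  let ⟨hpsd, σ, hσ, _, hsum⟩ := hT
  ⟨hpsd, σ, hσ, hsum⟩

theorem setOf_isTester_eq {d₂ d₁ M : ℕ} [NeZero d₂] :
    {W | IsTester d₂ d₁ M W} =
      {W ∈ testerCone (Fin M) (Fin d₂) (Fin d₁) | testerTrace (Fin M) (Fin d₂) (Fin d₁) W = 1} := by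
  ext W
  constructor
  · rintro ⟨hpsd, σ, hσ, htr, hsum⟩
    refine ⟨⟨hpsd, σ, hσ, hsum⟩, ?_⟩
    rw [testerTrace_apply, hsum, trace_kronecker, htr]
    simp [NeZero.ne]
  · rintro ⟨⟨hpsd, σ, hσ, hsum⟩, h1⟩
    refine ⟨hpsd, σ, hσ, ?_, hsum⟩
    have hre : σ.trace.re = 1 := by
      rw [testerTrace_apply, hsum, trace_kronecker] at h1
      simpa [NeZero.ne] using h1
    rw [Complex.eq_re_of_ofReal_le hσ.trace_nonneg, hre, Complex.ofReal_one]

theorem kronConj_mem_extremePoints_iff {d₂ d₁ M : ℕ} {c : ℝ} (hc : 0 < c)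
    {B : Matrix (Fin d₁) (Fin d₁) ℂ} (hB : IsUnit B)
    {T : Fin M → Matrix (Fin d₂ × Fin d₁) (Fin d₂ × Fin d₁) ℂ} (hT : IsTester d₂ d₁ M T)
    (hT' : IsTester d₂ d₁ M (kronConj (Fin M) (Fin d₂) c B T)) :
    kronConj (Fin M) (Fin d₂) c B T ∈ {W | IsTester d₂ d₁ M W}.extremePoints ℝ ↔
      T ∈ {W | IsTester d₂ d₁ M W}.extremePoints ℝ := by
  rcases Nat.eq_zero_or_pos d₂ with rfl | hd₂
  · rw [Subsingleton.elim (kronConj (Fin M) (Fin 0) c B T) T]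
  have : NeZero d₂ := ⟨hd₂.ne'⟩
  have hT : T ∈ {W | IsTester d₂ d₁ M W} := hT
  have hT' : kronConj (Fin M) (Fin d₂) c B T ∈ {W | IsTester d₂ d₁ M W} := hT'
  rw [setOf_isTester_eq] at hT hT' ⊢
  exact (kronConjEquiv (Fin M) (Fin d₂) hc.ne' hB).apply_mem_extremePoints_iff
    (fun _ ht _ hW => smul_mem_testerCone ht.le hW) (fun _ hW hW0 => testerTrace_pos hW hW0)
    (kronConj_mapsTo hc.le B) (kronConj_mapsTo (inv_nonneg.2 hc.le) _) hT hT'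

theorem stmt_6 {d₁ d₂ M : ℕ}
    (ρ U : Matrix (Fin d₁) (Fin d₁) ℂ)
    (hρ : ρ.PosSemidef) (hρtr : ρ.trace = 1) (hρrank : ρ.rank = d₁)
    (hU : U * Uᴴ = 1 ∧ Uᴴ * U = 1)
    (T : Fin M → Matrix (Fin d₂ × Fin d₁) (Fin d₂ × Fin d₁) ℂ)
    (hT : IsTester d₂ d₁ M T)
    (hnorm : ∑ i, T i =
      (1 : Matrix (Fin d₂) (Fin d₂) ℂ) ⊗ₖ ((d₁ : ℂ)⁻¹ • (1 : Matrix (Fin d₁) (Fin d₁) ℂ))) :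
    (∀ i, ((d₁ : ℂ) •
        (((1 : Matrix (Fin d₂) (Fin d₂) ℂ) ⊗ₖ (hρ.sqrt * U)) * T i *
          ((1 : Matrix (Fin d₂) (Fin d₂) ℂ) ⊗ₖ (Uᴴ * hρ.sqrt)))).PosSemidef) ∧
    (∑ i, (d₁ : ℂ) •
        (((1 : Matrix (Fin d₂) (Fin d₂) ℂ) ⊗ₖ (hρ.sqrt * U)) * T i *
          ((1 : Matrix (Fin d₂) (Fin d₂) ℂ) ⊗ₖ (Uᴴ * hρ.sqrt)))
      = (1 : Matrix (Fin d₂) (Fin d₂) ℂ) ⊗ₖ ρ) ∧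
    ((fun i => (d₁ : ℂ) •
        (((1 : Matrix (Fin d₂) (Fin d₂) ℂ) ⊗ₖ (hρ.sqrt * U)) * T i *
          ((1 : Matrix (Fin d₂) (Fin d₂) ℂ) ⊗ₖ (Uᴴ * hρ.sqrt))))
        ∈ {W | IsTester d₂ d₁ M W}.extremePoints ℝ ↔
      T ∈ {W | IsTester d₂ d₁ M W}.extremePoints ℝ) := by
  have hBH : (hρ.sqrt * U)ᴴ = Uᴴ * hρ.sqrt := by rw [conjTranspose_mul, hρ.conjTranspose_sqrt]
  have hT'_eq : ∀ i, (d₁ : ℂ) • (((1 : Matrix (Fin d₂) (Fin d₂) ℂ) ⊗ₖ (hρ.sqrt * U)) * T i *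
      ((1 : Matrix (Fin d₂) (Fin d₂) ℂ) ⊗ₖ (Uᴴ * hρ.sqrt))) =
        kronConj (Fin M) (Fin d₂) d₁ (hρ.sqrt * U) T i := fun i => by
    rw [kronConj_apply, hBH, Nat.cast_smul_eq_nsmul, Nat.cast_smul_eq_nsmul]
  simp only [hT'_eq]
  have hd₁ : (0 : ℝ) < d₁ :=
    Nat.cast_pos.2 <| Nat.pos_of_ne_zero <| by rintro rfl; simp [Matrix.trace] at hρtr
  have hsum : ∑ i, kronConj (Fin M) (Fin d₂) d₁ (hρ.sqrt * U) T i =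
      (1 : Matrix (Fin d₂) (Fin d₂) ℂ) ⊗ₖ ρ := by
    rw [sum_kronConj_of_sum_eq_inv_smul_one hd₁.ne' (by simpa using hnorm), hBH,
      Matrix.mul_assoc, ← Matrix.mul_assoc U, hU.1, Matrix.one_mul, hρ.sqrt_mul_sqrt]
  have hT'psd := (kronConj_mapsTo hd₁.le (hρ.sqrt * U) hT.mem_testerCone).1
  have hB : IsUnit (hρ.sqrt * U) :=
    (hρ.isUnit_sqrt (isUnit_of_rank_eq_card (by simpa using hρrank))).mul
      ⟨⟨U, Uᴴ, hU.1, hU.2⟩, rfl⟩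
  exact ⟨hT'psd, hsum, kronConj_mem_extremePoints_iff hd₁ hB hT ⟨hT'psd, ρ, hρ, hρtr, hsum⟩⟩
end

section
/- If {T_i}_{i=1}^M is an extremal quantum 1-tester on ℋ₂⊗ℋ₁ with normalization ∑_{i=1}^M T_i = (1/d₁) I₂⊗I₁, then the family {E_i = d₁ T_i}_{i=1}^M is an extremal POVM on ℋ₂⊗ℋ₁. -/
open Matrix Kronecker
open scoped ComplexOrder

/-- A POVM with `M` outcomes on a finite-dimensional Hilbert space. -/
def IsPOVM {n : Type*} [Fintype n] [DecidableEq n] (M : ℕ)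
    (E : Fin M → Matrix n n ℂ) : Prop :=
  (∀ i, (E i).PosSemidef) ∧ ∑ i, E i = 1

/-! The rescaling `E ↦ d₁⁻¹ • E` is an injective linear map sending every POVM on
`ℋ₂ ⊗ ℋ₁` to a 1-tester (with `ρ = I₁ / d₁`) and sending `d₁ • T` back to `T`. A nontrivial
decomposition of `d₁ • T` inside the POVMs would therefore map to a nontrivial decomposition of
the extremal tester `T`. -/

theorem mem_extremePoints_of_injective_of_mapsTo {𝕜 E F : Type*} [Semiring 𝕜] [PartialOrder 𝕜]
    [AddCommMonoid E] [Module 𝕜 E] [AddCommMonoid F] [Module 𝕜 F] (f : E →ₗ[𝕜] F)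
    (hf : Function.Injective f) {s : Set E} {t : Set F} (hst : Set.MapsTo f s t) {x : E}
    (hx : x ∈ s) (hfx : f x ∈ t.extremePoints 𝕜) : x ∈ s.extremePoints 𝕜 := by
  refine mem_extremePoints.2 ⟨hx, fun y hy z hz hxyz => ?_⟩
  obtain ⟨a, b, ha, hb, hab, rfl⟩ := hxyz
  have hseg : f (a • y + b • z) ∈ openSegment 𝕜 (f y) (f z) :=
    ⟨a, b, ha, hb, hab, by rw [map_add, map_smul, map_smul]⟩
  obtain ⟨hy', hz'⟩ := (mem_extremePoints.1 hfx).2 _ (hst hy) _ (hst hz) hseg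
  exact ⟨hf hy', hf hz'⟩

theorem IsTester.dim_ne_zero {d₂ d₁ M : ℕ}
    {T : Fin M → Matrix (Fin d₂ × Fin d₁) (Fin d₂ × Fin d₁) ℂ} (hT : IsTester d₂ d₁ M T) :
    d₁ ≠ 0 := by
  obtain ⟨-, ρ, -, hρ, -⟩ := hT
  rintro rfl
  simp [Matrix.trace] at hρ

theorem IsPOVM.isTester_inv_smul {d₂ d₁ M : ℕ} (hd : d₁ ≠ 0)
    {E : Fin M → Matrix (Fin d₂ × Fin d₁) (Fin d₂ × Fin d₁) ℂ} (hE : IsPOVM M E) :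
    IsTester d₂ d₁ M (fun i => (d₁ : ℂ)⁻¹ • E i) := by
  have hinv : (0 : ℂ) ≤ (d₁ : ℂ)⁻¹ := by positivity
  refine ⟨fun i => (hE.1 i).smul hinv, (d₁ : ℂ)⁻¹ • 1, PosSemidef.one.smul hinv, ?_, ?_⟩
  · simp [hd]
  · rw [← Finset.smul_sum, hE.2, kronecker_smul, one_kronecker_one]

theorem isPOVM_smul_of_sum_eq_inv_smul_one {n : Type*} [Fintype n] [DecidableEq n] {M : ℕ}
    {c : ℂ} (hc : 0 ≤ c) (hc₀ : c ≠ 0) {T : Fin M → Matrix n n ℂ} (hT : ∀ i, (T i).PosSemidef)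
    (hsum : ∑ i, T i = c⁻¹ • 1) : IsPOVM M (fun i => c • T i) :=
  ⟨fun i => (hT i).smul hc, by rw [← Finset.smul_sum, hsum, smul_smul, mul_inv_cancel₀ hc₀,
    one_smul]⟩

theorem stmt_8_general {d₁ d₂ M : ℕ} (T : Fin M → Matrix (Fin d₂ × Fin d₁) (Fin d₂ × Fin d₁) ℂ)
    (hnorm : ∑ i, T i =
      (d₁ : ℂ)⁻¹ • ((1 : Matrix (Fin d₂) (Fin d₂) ℂ) ⊗ₖ (1 : Matrix (Fin d₁) (Fin d₁) ℂ)))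
    (hext : T ∈ {W | IsTester d₂ d₁ M W}.extremePoints ℝ) :
    (fun i => (d₁ : ℂ) • T i) ∈
      {E : Fin M → Matrix (Fin d₂ × Fin d₁) (Fin d₂ × Fin d₁) ℂ |
        IsPOVM M E}.extremePoints ℝ := by
  have hT : IsTester d₂ d₁ M T := hext.1
  have hd : (d₁ : ℂ) ≠ 0 := Nat.cast_ne_zero.2 hT.dim_ne_zero
  let rescale : (Fin M → Matrix (Fin d₂ × Fin d₁) (Fin d₂ × Fin d₁) ℂ) →ₗ[ℝ]
      (Fin M → Matrix (Fin d₂ × Fin d₁) (Fin d₂ × Fin d₁) ℂ) := (d₁ : ℂ)⁻¹ • LinearMap.id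
  have hrescale : rescale (fun i => (d₁ : ℂ) • T i) = T := by
    ext i : 1
    simp [rescale, smul_smul, hd]
  refine mem_extremePoints_of_injective_of_mapsTo rescale (smul_right_injective _ (inv_ne_zero hd))
    (fun E hE => IsPOVM.isTester_inv_smul hT.dim_ne_zero hE) ?_ (hrescale ▸ hext)
  rw [one_kronecker_one] at hnorm
  exact isPOVM_smul_of_sum_eq_inv_smul_one (Nat.cast_nonneg' d₁) hd hT.1 hnorm

theorem stmt_8 {d₁ d₂ M : ℕ} (T : Fin M → Matrix (Fin d₂ × Fin d₁) (Fin d₂ × Fin d₁) ℂ)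
    (hT : IsTester d₂ d₁ M T)
    (hnorm : ∑ i, T i =
      (d₁ : ℂ)⁻¹ • ((1 : Matrix (Fin d₂) (Fin d₂) ℂ) ⊗ₖ (1 : Matrix (Fin d₁) (Fin d₁) ℂ)))
    (hext : T ∈ {W | IsTester d₂ d₁ M W}.extremePoints ℝ) :
    (fun i => (d₁ : ℂ) • T i) ∈
      {E : Fin M → Matrix (Fin d₂ × Fin d₁) (Fin d₂ × Fin d₁) ℂ |
        IsPOVM M E}.extremePoints ℝ :=
  stmt_8_general T hnorm hext
end

section
/- Let {E_i}_{i=1}^M be a POVM on ℋ₂ and let |φ⟩ be a unit vector in ℋ₁. The quantum 1-tester {T_i = E_i ⊗ |φ⟩⟨φ|}_{i=1}^M on ℋ₂⊗ℋ₁ is extremal if and only if the POVM {E_i}_{i=1}^M is extremal. -/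
/-!
With `P = |φ⟩⟨φ|`, the map `F ↦ (F i ⊗ₖ P)ᵢ` is injective and `ℝ`-linear, so it identifies the
extreme points of the POVMs with those of their image; it remains to see that this image is a
face of the convex set of testers. If `E i ⊗ P = a • W₁ i + b • W₂ i` with testers `W₁, W₂` and
`a, b > 0`, positivity forces `W₁ i` to vanish on the kernel of `1 ⊗ P = V Vᴴ`, where `V v = v ⊗ φ`
is an isometry; hence `W₁ i = V (Vᴴ W₁ i V) Vᴴ = (Vᴴ W₁ i V) ⊗ P`, and comparing partial traces in
`∑ i, W₁ i = 1 ⊗ ρ` shows that `Vᴴ W₁ i V` is a POVM.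
-/

open Matrix Kronecker
open scoped ComplexOrder

open Set

section ExtremePoints

variable {𝕜 E F : Type*} [Ring 𝕜] [PartialOrder 𝕜] [IsOrderedRing 𝕜]
  [AddCommGroup E] [Module 𝕜 E] [AddCommGroup F] [Module 𝕜 F]

theorem mem_extremePoints_image_iff_of_injective {f : E →ₗ[𝕜] F} (hf : Function.Injective f)
    {s : Set E} {x : E} : f x ∈ (f '' s).extremePoints 𝕜 ↔ x ∈ s.extremePoints 𝕜 := by
  have : ∀ y z, f '' openSegment 𝕜 y z = openSegment 𝕜 (f y) (f z) :=
    image_openSegment _ f.toAffineMap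
  simp only [mem_extremePoints, forall_mem_image, hf.mem_set_image, hf.eq_iff, ← this]

end ExtremePoints

namespace Matrix

variable {l m n p : Type*}

theorem sum_kronecker {ι R : Type*} [NonUnitalNonAssocSemiring R] (s : Finset ι)
    (A : ι → Matrix l m R) (B : Matrix n p R) : (∑ i ∈ s, A i) ⊗ₖ B = ∑ i ∈ s, A i ⊗ₖ B := by
  ext ⟨i, j⟩ ⟨k, j'⟩
  simp [kroneckerMap_apply, sum_apply, Finset.sum_mul]

theorem eq_of_kronecker_eq_kronecker {R : Type*} [Semiring R] [IsRightCancelMulZero R]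
    [Fintype n] {X Y : Matrix l m R} {P ρ : Matrix n n R} (htr : P.trace = ρ.trace)
    (hP : P.trace ≠ 0) (h : X ⊗ₖ P = Y ⊗ₖ ρ) : X = Y := by
  ext k k'
  refine mul_right_cancel₀ hP ?_
  calc X k k' * P.trace = ∑ j, X k k' * P j j := Finset.mul_sum ..
    _ = ∑ j, Y k k' * ρ j j := Finset.sum_congr rfl fun j _ => congrFun₂ h (k, j) (k', j)
    _ = Y k k' * P.trace := by rw [htr, trace, ← Finset.mul_sum]; rfl

theorem PosSemidef.mulVec_eq_zero_of_add {𝕜 : Type*} [RCLike 𝕜] [Fintype n]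
    {W R : Matrix n n 𝕜} (hW : W.PosSemidef) (hR : R.PosSemidef) {v : n → 𝕜}
    (h : (W + R) *ᵥ v = 0) : W *ᵥ v = 0 := by
  have hsum : star v ⬝ᵥ W *ᵥ v + star v ⬝ᵥ R *ᵥ v = 0 := by
    rw [← dotProduct_add, ← add_mulVec, h, dotProduct_zero]
  rw [← hW.dotProduct_mulVec_zero_iff]
  exact ((add_eq_zero_iff_of_nonneg (hW.dotProduct_mulVec_nonneg v)
    (hR.dotProduct_mulVec_nonneg v)).1 hsum).1

theorem IsHermitian.mul_mul_eq_self_of_ker {R : Type*} [Ring R] [StarRing R] [Fintype n]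
    {W Q : Matrix n n R} (hW : W.IsHermitian) (hQ : Q.IsHermitian) (hQQ : Q * Q = Q)
    (h : ∀ v, Q *ᵥ v = 0 → W *ᵥ v = 0) : Q * W * Q = W := by
  have hWQ : W * Q = W := ext_iff_mulVec.2 fun v => by
    have := h (v - Q *ᵥ v) (by rw [mulVec_sub, mulVec_mulVec, hQQ, sub_self])
    rwa [mulVec_sub, sub_eq_zero, mulVec_mulVec, eq_comm] at this
  have hQW : Q * W = W := by
    simpa only [conjTranspose_mul, hW.eq, hQ.eq] using congrArg (·ᴴ) hWQ
  rw [hQW, hWQ]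

def piKroneckerRight (R : Type*) {α : Type*} [CommSemiring R] [Semiring α] [Algebra R α]
    (ι : Type*) (P : Matrix n n α) :
    (ι → Matrix m m α) →ₗ[R] ι → Matrix (m × n) (m × n) α :=
  LinearMap.compLeft ((kroneckerBilinear (R := R)).flip P) ι

theorem piKroneckerRight_injective (R : Type*) {α : Type*} [CommSemiring R] [Semiring α]
    [Algebra R α] [IsRightCancelMulZero α] (ι : Type*) [Fintype n]
    {P : Matrix n n α} (hP : P.trace ≠ 0) :
    Function.Injective (piKroneckerRight R ι (m := m) P) :=
  fun _ _ h => funext fun i => eq_of_kronecker_eq_kronecker rfl hP (congrFun h i)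

section KroneckerCol

variable {R : Type*} [CommSemiring R] [StarRing R] [DecidableEq m]

/-- `kroneckerCol m φ` is `1 ⊗ₖ replicateCol Unit φ` with its `Unit` column index dropped:
the matrix of `v ↦ v ⊗ φ`. -/
def kroneckerCol (m : Type*) [DecidableEq m] (φ : n → R) : Matrix (m × n) m R :=
  of fun p k => (1 : Matrix m m R) p.1 k * φ p.2

variable [Fintype m]

theorem kroneckerCol_mul_mul_conjTranspose (φ : n → R) (F : Matrix m m R) :
    kroneckerCol m φ * F * (kroneckerCol m φ)ᴴ = F ⊗ₖ vecMulVec φ (star φ) := by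
  ext ⟨k, j⟩ ⟨k', j'⟩
  simp [kroneckerCol, mul_apply, one_apply, vecMulVec_apply, apply_ite (star : R → R)]
  ring

theorem conjTranspose_kroneckerCol_mul_self [Fintype n] {φ : n → R} (hφ : star φ ⬝ᵥ φ = 1) :
    (kroneckerCol m φ)ᴴ * kroneckerCol m φ = 1 := by
  ext k k'
  simp [kroneckerCol, mul_apply, one_apply, apply_ite (star : R → R), Fintype.sum_prod_type]
  rw [show ∑ j, star (φ j) * φ j = 1 from hφ]
  exact if_congr eq_comm rfl rfl

theorem trace_vecMulVec_self_star [Fintype n] {φ : n → R} (hφ : star φ ⬝ᵥ φ = 1) :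
    (vecMulVec φ (star φ)).trace = 1 := by
  rw [trace_vecMulVec, dotProduct_comm, hφ]

end KroneckerCol

theorem IsHermitian.eq_kronecker_of_ker {R : Type*} [CommRing R] [StarRing R] [DecidableEq m]
    [Fintype m] [Fintype n] {φ : n → R} (hφ : star φ ⬝ᵥ φ = 1)
    {W : Matrix (m × n) (m × n) R} (hW : W.IsHermitian)
    (F : Matrix m m R) (h : ∀ v, (F ⊗ₖ vecMulVec φ (star φ)) *ᵥ v = 0 → W *ᵥ v = 0) :
    W = ((kroneckerCol m φ)ᴴ * W * kroneckerCol m φ) ⊗ₖ vecMulVec φ (star φ) := by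
  set A := kroneckerCol m φ
  have hAA : Aᴴ * A = 1 := conjTranspose_kroneckerCol_mul_self hφ
  have hQQ : A * Aᴴ * (A * Aᴴ) = A * Aᴴ := by
    rw [Matrix.mul_assoc, ← Matrix.mul_assoc Aᴴ, hAA, Matrix.one_mul]
  have hFQ : A * F * Aᴴ * (A * Aᴴ) = A * F * Aᴴ := by
    rw [Matrix.mul_assoc (A * F), ← Matrix.mul_assoc Aᴴ, hAA, Matrix.one_mul]
  have hker : ∀ v, (A * Aᴴ) *ᵥ v = 0 → W *ᵥ v = 0 := fun v hv => h v <| by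
    rw [← kroneckerCol_mul_mul_conjTranspose, ← hFQ, ← mulVec_mulVec, hv, mulVec_zero]
  calc W = A * Aᴴ * W * (A * Aᴴ) :=
        (hW.mul_mul_eq_self_of_ker (isHermitian_mul_conjTranspose_self A) hQQ hker).symm
    _ = A * (Aᴴ * W * A) * Aᴴ := by simp only [Matrix.mul_assoc]
    _ = _ := kroneckerCol_mul_mul_conjTranspose φ _

end Matrix

theorem IsPOVM.isTester_kronecker {d₁ d₂ M : ℕ} {F : Fin M → Matrix (Fin d₂) (Fin d₂) ℂ}
    (hF : IsPOVM M F) {ρ : Matrix (Fin d₁) (Fin d₁) ℂ} (hρ : ρ.PosSemidef) (htr : ρ.trace = 1) :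
    IsTester d₂ d₁ M (piKroneckerRight ℝ (Fin M) ρ F) :=
  ⟨fun i => (hF.1 i).kronecker hρ, ρ, hρ, htr, by
    rw [← hF.2, sum_kronecker]; rfl⟩

theorem IsTester.mem_image_of_smul_add_eq {d₁ d₂ M : ℕ} {φ : Fin d₁ → ℂ}
    (hφ : star φ ⬝ᵥ φ = 1) {W R : Fin M → Matrix (Fin d₂ × Fin d₁) (Fin d₂ × Fin d₁) ℂ}
    {E : Fin M → Matrix (Fin d₂) (Fin d₂) ℂ} (hW : IsTester d₂ d₁ M W)
    (hR : ∀ i, (R i).PosSemidef) {a : ℝ} (ha : 0 < a)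
    (h : a • W + R = piKroneckerRight ℝ (Fin M) (vecMulVec φ (star φ)) E) :
    W ∈ piKroneckerRight ℝ (Fin M) (vecMulVec φ (star φ)) '' {F | IsPOVM M F} := by
  obtain ⟨hWpsd, ρ, -, hρtr, hWsum⟩ := hW
  set A := kroneckerCol (Fin d₂) φ
  have hWi : ∀ i, W i = (Aᴴ * W i * A) ⊗ₖ vecMulVec φ (star φ) := fun i =>
    (hWpsd i).isHermitian.eq_kronecker_of_ker hφ (E i) fun v hv => by
      have hsum : (a • W i + R i) *ᵥ v = 0 := by
        rw [← hv]; exact congrArg (· *ᵥ v) (congrFun h i)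
      have := ((hWpsd i).smul ha.le).mulVec_eq_zero_of_add (hR i) hsum
      rwa [smul_mulVec, smul_eq_zero, or_iff_right ha.ne'] at this
  refine ⟨fun i => Aᴴ * W i * A, ⟨fun i => (hWpsd i).conjTranspose_mul_mul_same A, ?_⟩,
    funext fun i => (hWi i).symm⟩
  have htr := trace_vecMulVec_self_star hφ
  refine eq_of_kronecker_eq_kronecker (htr.trans hρtr.symm) (htr ▸ one_ne_zero) ?_
  rw [sum_kronecker, ← hWsum]
  exact Finset.sum_congr rfl fun i _ => (hWi i).symm

theorem isExtreme_image_setOf_isPOVM {d₁ d₂ M : ℕ} {φ : Fin d₁ → ℂ} (hφ : star φ ⬝ᵥ φ = 1) :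
    IsExtreme ℝ {W | IsTester d₂ d₁ M W}
      (piKroneckerRight ℝ (Fin M) (vecMulVec φ (star φ)) '' {F | IsPOVM M F}) := by
  refine ⟨image_subset_iff.2 fun F hF =>
    hF.isTester_kronecker (posSemidef_vecMulVec_self_star φ) (trace_vecMulVec_self_star hφ), ?_⟩
  rintro W₁ hW₁ W₂ hW₂ _ ⟨E, -, rfl⟩ ⟨a, b, ha, hb, -, h⟩
  exact hW₁.mem_image_of_smul_add_eq hφ (fun i => (hW₂.1 i).smul hb.le) ha h

theorem stmt_9 {d₁ d₂ M : ℕ} (E : Fin M → Matrix (Fin d₂) (Fin d₂) ℂ)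
    (hE : IsPOVM M E)
    (φ : Fin d₁ → ℂ) (hφ : ∑ j, star (φ j) * φ j = 1) :
    (fun i => E i ⊗ₖ Matrix.vecMulVec φ (star φ)) ∈
        {W | IsTester d₂ d₁ M W}.extremePoints ℝ ↔
      E ∈ {F : Fin M → Matrix (Fin d₂) (Fin d₂) ℂ | IsPOVM M F}.extremePoints ℝ := by
  have hinj := piKroneckerRight_injective ℝ (Fin M) (m := Fin d₂)
    ((trace_vecMulVec_self_star hφ).trans_ne one_ne_zero)
  rw [← mem_extremePoints_image_iff_of_injective hinj,
    (isExtreme_image_setOf_isPOVM hφ).extremePoints_eq]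
  exact (and_iff_right (mem_image_of_mem _ (show E ∈ {F | IsPOVM M F} from hE))).symm
end

section
/- Let ℋ₂ = ℋ₁ = ℂ² and let |φ₁⟩ be a unit vector in ℂ²⊗ℂ². The two-outcome quantum 1-tester {T₁ = ½|φ₁⟩⟨φ₁|, T₂ = ½(I⊗I − |φ₁⟩⟨φ₁|)} is extremal if and only if |φ₁⟩ is not a product vector, i.e. if and only if |φ₁⟩ cannot be written as |f⟩⊗|e⟩ with |f⟩ ∈ ℋ₂, |e⟩ ∈ ℋ₁. -/
/-!
If `φ = f ⊗ e`, the tester `T = (½|φ⟩⟨φ|, ½(1 - |φ⟩⟨φ|))` is the midpoint of the two distinct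
testers `(F ⊗ E, (‖f‖² - F) ⊗ E)` and `(0, 1 ⊗ (1 - ‖f‖² E))`, where `F = |f⟩⟨f|`, `E = |e⟩⟨e|`.

Conversely, let `T = s • A + t • B` with testers `A`, `B` and `s, t > 0`. Since `(1 - |φ⟩⟨φ|) φ = 0`
we get `A 1 φ = 0`, and `s • A 0 ≤ ½|φ⟩⟨φ|` forces `A 0 = a |φ⟩⟨φ|`. Hence `(1 ⊗ ρ) φ = a φ` for the
density operator `ρ` of `A`. Reading `φ` as the `2 × 2` matrix `Φ`, this says `Φ ρᵀ = a Φ`; a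
`2 × 2` matrix of determinant zero has rank at most one, so `Φ` is invertible when `φ` is not a
product vector. Then `ρ = a • 1`, the trace condition gives `a = ½`, and `A = T`.
-/

open Matrix Kronecker
open scoped ComplexOrder

namespace Matrix

section RCLike

variable {𝕜 n : Type*} [RCLike 𝕜] [Fintype n]

lemma trace_vecMulVec_star (v : n → 𝕜) : (vecMulVec v (star v)).trace = star v ⬝ᵥ v := by
  rw [trace, diag_vecMulVec, dotProduct_comm]
  rfl

lemma IsHermitian.posSemidef_of_isIdempotentElem {P : Matrix n n 𝕜} (hP : P.IsHermitian)
    (h : IsIdempotentElem P) : P.PosSemidef := by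
  simpa [hP.eq, h.eq] using posSemidef_conjTranspose_mul_self P

lemma posSemidef_dotProduct_smul_one_sub_vecMulVec [DecidableEq n] (v : n → 𝕜) :
    ((star v ⬝ᵥ v) • 1 - vecMulVec v (star v)).PosSemidef := by
  obtain rfl | hv := eq_or_ne v 0
  · simpa using PosSemidef.zero
  set c := star v ⬝ᵥ v
  have hc : 0 < c := dotProduct_star_self_pos_iff.mpr hv
  have hP : vecMulVec v (star v) * vecMulVec v (star v) = c • vecMulVec v (star v) := by
    rw [vecMulVec_mul_vecMulVec, vecMulVec_smul]
  -- `c • 1 - |v⟩⟨v|` is `c` times the orthogonal projection onto the complement of `v`.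
  have hQ : (1 - c⁻¹ • vecMulVec v (star v)).PosSemidef := by
    refine IsHermitian.posSemidef_of_isIdempotentElem ?_ ?_
    · simp [IsHermitian, conjTranspose_vecMulVec, (IsSelfAdjoint.of_nonneg hc.le).star_eq]
    · simp [IsIdempotentElem, sub_mul, mul_sub, hP, smul_smul, inv_mul_cancel₀ hc.ne']
  convert hQ.smul hc.le using 1
  rw [smul_sub, smul_smul, mul_inv_cancel₀ hc.ne', one_smul]

lemma PosSemidef.mulVec_eq_zero_of_add_s11 {A B : Matrix n n 𝕜} (hA : A.PosSemidef)
    (hB : B.PosSemidef) {x : n → 𝕜} (h : (A + B) *ᵥ x = 0) : A *ᵥ x = 0 := by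
  have hsum : star x ⬝ᵥ A *ᵥ x + star x ⬝ᵥ B *ᵥ x = 0 := by
    rw [← dotProduct_add, ← add_mulVec, h, dotProduct_zero]
  have hAx := ((add_eq_zero_iff_of_nonneg (hA.dotProduct_mulVec_nonneg x)
    (hB.dotProduct_mulVec_nonneg x)).mp hsum).1
  exact (hA.dotProduct_mulVec_zero_iff x).mp hAx

lemma PosSemidef.eq_smul_vecMulVec_of_add_eq {A B : Matrix n n 𝕜} (hA : A.PosSemidef)
    (hB : B.PosSemidef) {v : n → 𝕜} (hv : star v ⬝ᵥ v = 1) {c : 𝕜}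
    (h : A + B = c • vecMulVec v (star v)) :
    A = (star v ⬝ᵥ A *ᵥ v) • vecMulVec v (star v) := by
  set P := vecMulVec v (star v)
  have hker : ∀ w, star v ⬝ᵥ w = 0 → A *ᵥ w = 0 := fun w hw ↦
    hA.mulVec_eq_zero_of_add_s11 hB (by simp [P, h, smul_mulVec, vecMulVec_mulVec, hw])
  have hAP : A * P = A := by
    refine ext_iff_mulVec.mpr fun x ↦ ?_
    have hx : star v ⬝ᵥ (x - P *ᵥ x) = 0 := by
      simp [P, dotProduct_sub, vecMulVec_mulVec, dotProduct_smul, hv]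
    rw [← mulVec_mulVec, ← sub_eq_zero, ← mulVec_sub, ← neg_sub, mulVec_neg, hker _ hx, neg_zero]
  have hPA : P * A = A := by
    simpa [P, conjTranspose_vecMulVec, hA.isHermitian.eq] using congrArg (·ᴴ) hAP
  calc A = P * A * P := by rw [hPA, hAP]
    _ = (star v ⬝ᵥ A *ᵥ v) • P := by
      rw [vecMulVec_mul, vecMulVec_mul_vecMulVec, ← dotProduct_mulVec, vecMulVec_smul]

end RCLike

lemma sub_kronecker {α l m n p : Type*} [Ring α] (A₁ A₂ : Matrix l m α) (B : Matrix n p α) :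
    (A₁ - A₂) ⊗ₖ B = A₁ ⊗ₖ B - A₂ ⊗ₖ B := by
  ext
  simp [sub_mul]

lemma kronecker_sub {α l m n p : Type*} [Ring α] (A : Matrix l m α) (B₁ B₂ : Matrix n p α) :
    A ⊗ₖ (B₁ - B₂) = A ⊗ₖ B₁ - A ⊗ₖ B₂ := by
  ext
  simp [mul_sub]

lemma vecMulVec_star_eq_kronecker {α m n : Type*} [CommSemiring α] [StarRing α] (f : m → α)
    (e : n → α) :
    vecMulVec (fun p ↦ f p.1 * e p.2) (star fun p ↦ f p.1 * e p.2) =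
      vecMulVec f (star f) ⊗ₖ vecMulVec e (star e) := by
  ext ⟨i, i'⟩ ⟨j, j'⟩
  simp only [kroneckerMap_apply, vecMulVec_apply, Pi.star_apply, star_mul']
  ring

lemma of_curry_one_kronecker_mulVec {α m n : Type*} [CommSemiring α] [Fintype m] [Fintype n]
    [DecidableEq n] (ρ : Matrix m m α) (φ : n × m → α) :
    of (Function.curry ((1 ⊗ₖ ρ) *ᵥ φ)) = of (Function.curry φ) * ρᵀ := by
  ext i j
  simp [mulVec, dotProduct, mul_apply, Fintype.sum_prod_type, one_apply, mul_comm]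

lemma eq_smul_one_of_one_kronecker_mulVec_eq_smul {K n : Type*} [Field K] [Fintype n]
    [DecidableEq n] {φ : n × n → K} (hφ : (of (Function.curry φ)).det ≠ 0)
    {ρ : Matrix n n K} {a : K} (h : (1 ⊗ₖ ρ) *ᵥ φ = a • φ) : ρ = a • 1 := by
  have hΦ : IsUnit (of (Function.curry φ)) := (isUnit_iff_isUnit_det _).mpr hφ.isUnit
  have hρ : of (Function.curry φ) * ρᵀ = of (Function.curry φ) * (a • 1) := by
    rw [← of_curry_one_kronecker_mulVec, h, Matrix.mul_smul, mul_one]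
    rfl
  simpa using congrArg transpose (hΦ.mul_left_cancel hρ)

lemma exists_eq_mul_of_mul_eq_mul {K m n : Type*} [Field K] {φ : m × n → K}
    (h : ∀ i i' j j', φ (i, j) * φ (i', j') = φ (i, j') * φ (i', j)) :
    ∃ (f : m → K) (e : n → K), φ = fun p ↦ f p.1 * e p.2 := by
  by_cases hφ : φ = 0
  · exact ⟨0, 0, funext fun p ↦ by simp [hφ]⟩
  obtain ⟨⟨i₀, j₀⟩, hφ₀⟩ := Function.ne_iff.mp hφ
  refine ⟨fun i ↦ φ (i, j₀) / φ (i₀, j₀), fun j ↦ φ (i₀, j), funext fun ⟨i, j⟩ ↦ ?_⟩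
  rw [div_mul_eq_mul_div, eq_div_iff hφ₀, h]

lemma exists_eq_mul_of_det_eq_zero {K : Type*} [Field K] {φ : Fin 2 × Fin 2 → K}
    (h : (of (Function.curry φ)).det = 0) :
    ∃ (f : Fin 2 → K) (e : Fin 2 → K), φ = fun p ↦ f p.1 * e p.2 := by
  rw [det_fin_two] at h
  simp only [of_apply, Function.curry_apply] at h
  refine exists_eq_mul_of_mul_eq_mul fun i i' j j' ↦ ?_
  fin_cases i <;> fin_cases i' <;> fin_cases j <;> fin_cases j' <;> grind

end Matrix

noncomputable def halfProjTester (φ : Fin 2 × Fin 2 → ℂ) :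
    Fin 2 → Matrix (Fin 2 × Fin 2) (Fin 2 × Fin 2) ℂ :=
  ![(1 / 2 : ℂ) • vecMulVec φ (star φ), (1 / 2 : ℂ) • (1 - vecMulVec φ (star φ))]

section halfProjTester

variable {φ : Fin 2 × Fin 2 → ℂ}

lemma isTester_halfProjTester (hφ : star φ ⬝ᵥ φ = 1) : IsTester 2 2 2 (halfProjTester φ) := by
  have hhalf : (0 : ℂ) ≤ 1 / 2 := by norm_num [Complex.le_def]
  refine ⟨fun i ↦ ?_, (1 / 2 : ℂ) • 1, PosSemidef.one.smul hhalf, by simp, ?_⟩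
  · fin_cases i
    · exact (posSemidef_vecMulVec_self_star φ).smul hhalf
    · simpa [halfProjTester, hφ] using (posSemidef_dotProduct_smul_one_sub_vecMulVec φ).smul hhalf
  · simp [halfProjTester, Fin.sum_univ_two, ← smul_add, kronecker_smul]

lemma exists_isTester_mem_openSegment_of_eq_mul (hφ : star φ ⬝ᵥ φ = 1) {f e : Fin 2 → ℂ}
    (hfe : φ = fun p ↦ f p.1 * e p.2) :
    ∃ A B, IsTester 2 2 2 A ∧ IsTester 2 2 2 B ∧ (A 0).trace = 1 ∧
      halfProjTester φ ∈ openSegment ℝ A B := by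
  have hP : vecMulVec φ (star φ) = vecMulVec f (star f) ⊗ₖ vecMulVec e (star e) := by
    rw [hfe, vecMulVec_star_eq_kronecker]
  have hfe_norm : (star f ⬝ᵥ f) * (star e ⬝ᵥ e) = 1 := by
    rw [← trace_vecMulVec_star, ← trace_vecMulVec_star, ← trace_kronecker, ← hP,
      trace_vecMulVec_star, hφ]
  set F := vecMulVec f (star f)
  set E := vecMulVec e (star e)
  set cf := star f ⬝ᵥ f
  have hcf : 0 ≤ cf := dotProduct_star_self_nonneg f
  have hE : (1 - cf • E).PosSemidef := by
    have : 1 - cf • E = cf • ((star e ⬝ᵥ e) • 1 - E) := by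
      rw [smul_sub, smul_smul, hfe_norm, one_smul]
    rw [this]
    exact (posSemidef_dotProduct_smul_one_sub_vecMulVec e).smul hcf
  refine ⟨![F ⊗ₖ E, (cf • 1 - F) ⊗ₖ E], ![0, 1 ⊗ₖ (1 - cf • E)], ?_, ?_, ?_, ?_⟩
  · refine ⟨fun i ↦ ?_, cf • E, (posSemidef_vecMulVec_self_star e).smul hcf, ?_, ?_⟩
    · fin_cases i
      · exact (posSemidef_vecMulVec_self_star f).kronecker (posSemidef_vecMulVec_self_star e)
      · exact (posSemidef_dotProduct_smul_one_sub_vecMulVec f).kronecker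
          (posSemidef_vecMulVec_self_star e)
    · rw [trace_smul, trace_vecMulVec_star, smul_eq_mul, hfe_norm]
    · simp [Fin.sum_univ_two, ← add_kronecker, smul_kronecker, kronecker_smul]
  · refine ⟨fun i ↦ ?_, 1 - cf • E, hE, ?_, by simp [Fin.sum_univ_two]⟩
    · fin_cases i
      · exact PosSemidef.zero
      · exact PosSemidef.one.kronecker hE
    · rw [trace_sub, trace_smul, trace_vecMulVec_star, smul_eq_mul, hfe_norm]
      norm_num
  · rw [cons_val_zero, ← hP, trace_vecMulVec_star, hφ]
  · refine ⟨1 / 2, 1 / 2, by norm_num, by norm_num, by norm_num, funext fun i ↦ ?_⟩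
    fin_cases i
    · simp [halfProjTester, hP, ← Complex.coe_smul]
    · change (1 / 2 : ℝ) • ((cf • 1 - F) ⊗ₖ E) + (1 / 2 : ℝ) • (1 ⊗ₖ (1 - cf • E)) =
        (1 / 2 : ℂ) • (1 - vecMulVec φ (star φ))
      rw [hP, sub_kronecker, kronecker_sub, smul_kronecker, kronecker_smul, one_kronecker_one,
        ← Complex.coe_smul, ← Complex.coe_smul]
      push_cast
      module

lemma halfProjTester_notMem_extremePoints_of_eq_mul (hφ : star φ ⬝ᵥ φ = 1) {f e : Fin 2 → ℂ}
    (hfe : φ = fun p ↦ f p.1 * e p.2) :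
    halfProjTester φ ∉ {W | IsTester 2 2 2 W}.extremePoints ℝ := by
  obtain ⟨A, B, hA, hB, hA0, hmid⟩ := exists_isTester_mem_openSegment_of_eq_mul hφ hfe
  intro hext
  have htr := congrArg (fun T ↦ trace (T 0)) (hext.2 hA hB hmid)
  simp only [hA0, halfProjTester, cons_val_zero, trace_smul, trace_vecMulVec_star, hφ] at htr
  norm_num at htr

lemma IsTester.eq_halfProjTester (hφ : star φ ⬝ᵥ φ = 1) (hdet : (of (Function.curry φ)).det ≠ 0)
    {A : Fin 2 → Matrix (Fin 2 × Fin 2) (Fin 2 × Fin 2) ℂ} (hA : IsTester 2 2 2 A) {a : ℂ}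
    (h0 : A 0 = a • vecMulVec φ (star φ)) (h1 : A 1 *ᵥ φ = 0) :
    A = halfProjTester φ := by
  obtain ⟨-, ρ, -, hρtr, hsum⟩ := hA
  rw [Fin.sum_univ_two] at hsum
  have hρ : ρ = a • 1 := eq_smul_one_of_one_kronecker_mulVec_eq_smul hdet <| by
    rw [← hsum, add_mulVec, h0, h1, smul_mulVec, vecMulVec_mulVec, hφ]
    simp
  have ha : a = 1 / 2 := by
    rw [hρ] at hρtr
    simp only [trace_smul, trace_one, Fintype.card_fin, Nat.cast_ofNat, smul_eq_mul] at hρtr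
    linear_combination hρtr / 2
  have hA1 : A 1 = 1 ⊗ₖ ρ - A 0 := eq_sub_of_add_eq' hsum
  funext i
  fin_cases i
  · simp [halfProjTester, h0, ha]
  · simp [halfProjTester, hA1, h0, hρ, ha, kronecker_smul, smul_sub]

lemma eq_halfProjTester_of_mem_openSegment (hφ : star φ ⬝ᵥ φ = 1)
    (hdet : (of (Function.curry φ)).det ≠ 0)
    {A B : Fin 2 → Matrix (Fin 2 × Fin 2) (Fin 2 × Fin 2) ℂ} (hA : IsTester 2 2 2 A)
    (hB : IsTester 2 2 2 B) (h : halfProjTester φ ∈ openSegment ℝ A B) :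
    A = halfProjTester φ := by
  obtain ⟨s, t, hs, ht, -, hst⟩ := h
  have h0 : s • A 0 + t • B 0 = (1 / 2 : ℂ) • vecMulVec φ (star φ) := congrFun hst 0
  have h1 : s • A 1 + t • B 1 = (1 / 2 : ℂ) • (1 - vecMulVec φ (star φ)) := congrFun hst 1
  have hA1 : A 1 *ᵥ φ = 0 := by
    have := ((hA.1 1).smul hs.le).mulVec_eq_zero_of_add_s11 ((hB.1 1).smul ht.le) (x := φ) <| by
      rw [h1, smul_mulVec, sub_mulVec, one_mulVec, vecMulVec_mulVec, hφ]
      simp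
    simpa [smul_mulVec, hs.ne'] using this
  have hA0 := ((hA.1 0).smul hs.le).eq_smul_vecMulVec_of_add_eq ((hB.1 0).smul ht.le) hφ h0
  refine hA.eq_halfProjTester hφ hdet (a := (s : ℂ)⁻¹ * (star φ ⬝ᵥ (s • A 0) *ᵥ φ)) ?_ hA1
  rw [mul_smul, ← hA0, ← Complex.coe_smul, inv_smul_smul₀ (Complex.ofReal_ne_zero.mpr hs.ne')]

end halfProjTester

theorem stmt_11 (φ : Fin 2 × Fin 2 → ℂ) (hφ : ∑ p, star (φ p) * φ p = 1) :
    ![(1/2 : ℂ) • Matrix.vecMulVec φ (star φ),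
      (1/2 : ℂ) • ((1 : Matrix (Fin 2 × Fin 2) (Fin 2 × Fin 2) ℂ) -
        Matrix.vecMulVec φ (star φ))] ∈
        {W | IsTester 2 2 2 W}.extremePoints ℝ ↔
      ¬ ∃ (f e : Fin 2 → ℂ), φ = fun p => f p.1 * e p.2 := by
  change halfProjTester φ ∈ _ ↔ _
  replace hφ : star φ ⬝ᵥ φ = 1 := hφ
  refine ⟨fun hext ⟨f, e, hfe⟩ ↦ halfProjTester_notMem_extremePoints_of_eq_mul hφ hfe hext,
    fun hent ↦ ?_⟩
  have hdet : (of (Function.curry φ)).det ≠ 0 := fun h ↦ hent (exists_eq_mul_of_det_eq_zero h)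
  exact ⟨isTester_halfProjTester hφ, fun A hA B hB hmid ↦
    eq_halfProjTester_of_mem_openSegment hφ hdet hA hB hmid⟩
end

section
/- If {N_i}_{i=1}^M is an extremal quantum instrument from ℋ₀ to ℋ₁, then ∑_{i=1}^M rank(N_i)² ≤ d₀². -/
open Matrix Kronecker
open scoped ComplexOrder

/-- The rank-one operator `|A⟩⟩⟨⟨B|` on `ℋ₁ ⊗ ℋ₀` built from the vectorizations
`|A⟩⟩ = (A ⊗ I)∑ⱼ |j⟩⊗|j⟩` of linear maps `A B : ℋ₀ → ℋ₁`. -/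
def outerCJ {d₁ d₀ : ℕ} (A B : Matrix (Fin d₁) (Fin d₀) ℂ) :
    Matrix (Fin d₁ × Fin d₀) (Fin d₁ × Fin d₀) ℂ :=
  fun p q => A p.1 p.2 * star (B q.1 q.2)

/-- A quantum instrument with `M` outcomes from `ℋ₀` to `ℋ₁`, described by its
Choi–Jamiołkowski operators: positive semidefinite operators on `ℋ₁ ⊗ ℋ₀` whose
sum has partial trace over `ℋ₁` equal to the identity on `ℋ₀`. -/
def IsInstrument (d₁ d₀ M : ℕ)
    (N : Fin M → Matrix (Fin d₁ × Fin d₀) (Fin d₁ × Fin d₀) ℂ) : Prop :=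
  (∀ i, (N i).PosSemidef) ∧
    Matrix.of (fun j j_ : Fin d₀ => ∑ k : Fin d₁, (∑ i, N i) (k, j) (k, j_))
      = (1 : Matrix (Fin d₀) (Fin d₀) ℂ)

/-!
Write `N i = V i * (V i)ᴴ` with `V i` of full column rank `r i = rank (N i)`. The ℂ-linear map
`G ↦ Tr₁ (∑ i, V i * G i * (V i)ᴴ)` on families of `r i × r i` matrices commutes with `ᴴ`, so
when `∑ i, r i ^ 2 > d₀ ^ 2` its kernel contains a nonzero Hermitian family `H`. For small
`ε > 0` the families `N i ± V i * (ε • H i) * (V i)ᴴ = V i * (1 ± ε • H i) * (V i)ᴴ` are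
instruments with midpoint `N`, so extremality forces `V i * H i * (V i)ᴴ = 0`, hence `H = 0`
because `V i` has full column rank.
-/

lemma IsSelfAdjoint.one_add_nonneg_of_norm_le_one {A : Type*} [CStarAlgebra A] [PartialOrder A]
    [StarOrderedRing A] {a : A} (ha : IsSelfAdjoint a) (h : ‖a‖ ≤ 1) : 0 ≤ 1 + a := by
  have := ha.neg.le_algebraMap_norm_self.trans (algebraMap_mono A ((norm_neg a).trans_le h))
  rwa [map_one, neg_le_iff_add_nonneg] at this

lemma Submodule.exists_isSelfAdjoint_ne_zero_mem {E : Type*} [AddCommGroup E] [Module ℂ E]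
    [StarAddMonoid E] [StarModule ℂ E] {p : Submodule ℂ E} (hp : ∀ x ∈ p, star x ∈ p)
    (hp0 : p ≠ ⊥) : ∃ y ∈ p, IsSelfAdjoint y ∧ y ≠ 0 := by
  obtain ⟨x, hx, hx0⟩ := (Submodule.ne_bot_iff p).mp hp0
  by_cases hre : (realPart x : E) = 0
  · refine ⟨imaginaryPart x, ?_, (imaginaryPart x).2, fun him => hx0 ?_⟩
    · rw [imaginaryPart_apply_coe]
      exact p.smul_mem _ (p.smul_of_tower_mem _ (p.sub_mem hx (hp x hx)))
    · rw [← realPart_add_I_smul_imaginaryPart x, hre, him, smul_zero, add_zero]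
  · refine ⟨realPart x, ?_, (realPart x).2, hre⟩
    rw [realPart_apply_coe]
    exact p.smul_of_tower_mem _ (p.add_mem hx (hp x hx))

namespace Matrix

lemma eq_zero_of_rank_eq_zero {R m n : Type*} [Field R] [Fintype n]
    {X : Matrix m n R} (h : X.rank = 0) : X = 0 := by
  classical
  rw [Matrix.rank, Submodule.finrank_eq_zero, LinearMap.range_eq_bot] at h
  exact Matrix.toLin'.injective (by rw [Matrix.toLin'_apply', h, map_zero])

lemma eq_zero_of_mul_eq_zero_of_rank_eq_card {R l m κ : Type*} [Field R] [Finite m]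
    [Fintype κ] [Fintype l] {V : Matrix m κ R} (hV : V.rank = Fintype.card κ)
    {X : Matrix κ l R} (h : V * X = 0) : X = 0 :=
  eq_zero_of_rank_eq_zero (by have := rank_add_rank_le_card_of_mul_eq_zero h; omega)

lemma eq_zero_of_mul_mul_conjTranspose_eq_zero {R m κ : Type*} [Field R] [StarRing R]
    [Fintype m] [Fintype κ] {V : Matrix m κ R} (hV : V.rank = Fintype.card κ)
    {K : Matrix κ κ R} (h : V * K * Vᴴ = 0) : K = 0 := by
  have hKV : K * Vᴴ = 0 :=
    eq_zero_of_mul_eq_zero_of_rank_eq_card hV (by rwa [← Matrix.mul_assoc])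
  have hVK : V * Kᴴ = 0 := by
    rw [← conjTranspose_conjTranspose V, ← conjTranspose_mul, hKV, conjTranspose_zero]
  simpa using eq_zero_of_mul_eq_zero_of_rank_eq_card hV hVK

lemma PosSemidef.exists_eq_mul_conjTranspose {𝕜 n : Type*} [RCLike 𝕜] [Fintype n]
    [DecidableEq n] {A : Matrix n n 𝕜} (hA : A.PosSemidef) :
    ∃ V : Matrix n (Fin A.rank) 𝕜, A = V * Vᴴ := by
  classical
  set ev := hA.isHermitian.eigenvalues
  set U : Matrix n n 𝕜 := ↑hA.isHermitian.eigenvectorUnitary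
  let W : Matrix n n 𝕜 := U * diagonal fun i => (√(ev i) : 𝕜)
  have hW : A = W * Wᴴ := by
    have hsq : (fun i => (√(ev i) : 𝕜) * (√(ev i) : 𝕜)) = RCLike.ofReal ∘ ev :=
      funext fun i => by
        rw [Function.comp_apply, ← RCLike.ofReal_mul, Real.mul_self_sqrt (hA.eigenvalues_nonneg i)]
    conv_lhs => rw [hA.isHermitian.spectral_theorem, Unitary.conjStarAlgAut_apply]
    simp only [W, conjTranspose_mul, diagonal_conjTranspose, Matrix.mul_assoc,
      ← Matrix.mul_assoc (diagonal _), diagonal_mul_diagonal, star_eq_conjTranspose]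
    simp [U, hsq, ev]
  let e : {i // ev i ≠ 0} ≃ Fin A.rank :=
    Fintype.equivFinOfCardEq hA.isHermitian.rank_eq_card_non_zero_eigs.symm
  refine ⟨W.submatrix id (Subtype.val ∘ e.symm), ?_⟩
  ext p q
  calc A p q = ∑ i, W p i * Wᴴ i q := by rw [← mul_apply, ← hW]
    _ = ∑ i : {i // ev i ≠ 0}, W p i * Wᴴ i q := by
        refine (Fintype.sum_subtype_add_sum_subtype (fun i => ev i ≠ 0) _).symm.trans ?_
        refine add_eq_left.mpr (Fintype.sum_eq_zero _ fun i => ?_)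
        simp [W, not_not.mp i.2]
    _ = _ := by rw [mul_apply, ← e.symm.sum_comp]; rfl

open scoped Matrix.Norms.L2Operator MatrixOrder in
lemma exists_pos_posSemidef_one_add_smul_and_one_sub_smul {ι : Type*} [Fintype ι]
    {n : ι → Type*} [∀ i, Fintype (n i)] [∀ i, DecidableEq (n i)]
    {H : ∀ i, Matrix (n i) (n i) ℂ} (hH : ∀ i, (H i).IsHermitian) :
    ∃ ε : ℝ, 0 < ε ∧ ∀ i, (1 + (ε : ℂ) • H i).PosSemidef ∧ (1 - (ε : ℂ) • H i).PosSemidef := by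
  set ε : ℝ := (1 + ∑ i, ‖H i‖)⁻¹
  have hε : 0 < ε := by positivity
  have hsmall : ∀ i, ‖(ε : ℂ) • H i‖ ≤ 1 := fun i => by
    rw [norm_smul, Complex.norm_real, Real.norm_of_nonneg hε.le, inv_mul_le_one₀ (by positivity)]
    linarith [Finset.single_le_sum (fun j _ => norm_nonneg (H j)) (Finset.mem_univ i)]
  have hsa : ∀ i, IsSelfAdjoint ((ε : ℂ) • H i) := fun i =>
    IsSelfAdjoint.smul (Complex.conj_ofReal ε) (hH i).isSelfAdjoint
  refine ⟨ε, hε, fun i => ⟨?_, ?_⟩⟩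
  · rw [← nonneg_iff_posSemidef]
    exact (hsa i).one_add_nonneg_of_norm_le_one (hsmall i)
  · rw [← nonneg_iff_posSemidef, sub_eq_add_neg]
    exact (hsa i).neg.one_add_nonneg_of_norm_le_one ((norm_neg _).trans_le (hsmall i))

section PartialTrace

variable {R m n : Type*} [CommSemiring R] [Fintype m]

def partialTraceLeft : Matrix (m × n) (m × n) R →ₗ[R] Matrix n n R where
  toFun X := of fun j j' => ∑ k, X (k, j) (k, j')
  map_add' X Y := by ext; simp [Finset.sum_add_distrib]
  map_smul' c X := by ext; simp [Finset.mul_sum]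

lemma partialTraceLeft_conjTranspose [StarRing R] (X : Matrix (m × n) (m × n) R) :
    partialTraceLeft Xᴴ = (partialTraceLeft X)ᴴ := by
  ext; simp [partialTraceLeft, star_sum]

end PartialTrace

section ConjSum

variable {ι m n : Type*} [Fintype ι] [Fintype m] {κ : ι → Type*}
  [∀ i, Fintype (κ i)]

def partialTraceConjSum (V : ∀ i, Matrix (m × n) (κ i) ℂ) :
    (∀ i, Matrix (κ i) (κ i) ℂ) →ₗ[ℂ] Matrix n n ℂ where
  toFun G := partialTraceLeft (∑ i, V i * G i * (V i)ᴴ)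
  map_add' G G' := by
    simp only [Pi.add_apply, Matrix.mul_add, Matrix.add_mul, Finset.sum_add_distrib, map_add]
  map_smul' c G := by
    simp only [Pi.smul_apply, Matrix.mul_smul, Matrix.smul_mul, ← Finset.smul_sum, map_smul,
      RingHom.id_apply]

lemma partialTraceConjSum_star (V : ∀ i, Matrix (m × n) (κ i) ℂ)
    (G : ∀ i, Matrix (κ i) (κ i) ℂ) :
    partialTraceConjSum V (star G) = star (partialTraceConjSum V G) := by
  simp [partialTraceConjSum, star_eq_conjTranspose, ← partialTraceLeft_conjTranspose,
    Matrix.mul_assoc]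

lemma exists_isSelfAdjoint_ne_zero_partialTraceConjSum_eq_zero
    [Fintype n] (V : ∀ i, Matrix (m × n) (κ i) ℂ)
    (h : Fintype.card n ^ 2 < ∑ i, Fintype.card (κ i) ^ 2) :
    ∃ H, IsSelfAdjoint H ∧ H ≠ 0 ∧ partialTraceConjSum V H = 0 := by
  have hker : LinearMap.ker (partialTraceConjSum V) ≠ ⊥ := by
    refine LinearMap.ker_ne_bot_of_finrank_lt ?_
    simpa [Module.finrank_pi_fintype, Module.finrank_matrix, sq] using h
  obtain ⟨H, hH, hsa, hH0⟩ := Submodule.exists_isSelfAdjoint_ne_zero_mem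
    (fun G hG => by rw [LinearMap.mem_ker, partialTraceConjSum_star, hG, star_zero]) hker
  exact ⟨H, hsa, hH0, hH⟩

end ConjSum

end Matrix

lemma isInstrument_iff {d₁ d₀ M : ℕ}
    {N : Fin M → Matrix (Fin d₁ × Fin d₀) (Fin d₁ × Fin d₀) ℂ} :
    IsInstrument d₁ d₀ M N ↔ (∀ i, (N i).PosSemidef) ∧ partialTraceLeft (∑ i, N i) = 1 :=
  Iff.rfl

lemma eq_zero_of_mem_extremePoints_isInstrument {d₁ d₀ M : ℕ}
    {N D : Fin M → Matrix (Fin d₁ × Fin d₀) (Fin d₁ × Fin d₀) ℂ}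
    (hext : N ∈ {W | IsInstrument d₁ d₀ M W}.extremePoints ℝ)
    (hD : partialTraceLeft (∑ i, D i) = 0)
    (hadd : ∀ i, (N i + D i).PosSemidef) (hsub : ∀ i, (N i - D i).PosSemidef) : D = 0 := by
  have htr : partialTraceLeft (∑ i, N i) = 1 := (isInstrument_iff.mp hext.1).2
  have hplus : IsInstrument d₁ d₀ M (N + D) := isInstrument_iff.mpr
    ⟨hadd, by simp only [Pi.add_apply, Finset.sum_add_distrib, map_add, htr, hD, add_zero]⟩
  have hminus : IsInstrument d₁ d₀ M (N - D) := isInstrument_iff.mpr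
    ⟨hsub, by simp only [Pi.sub_apply, Finset.sum_sub_distrib, map_sub, htr, hD, sub_zero]⟩
  have hseg : N ∈ openSegment ℝ (N + D) (N - D) :=
    ⟨1 / 2, 1 / 2, by norm_num, by norm_num, by norm_num, by module⟩
  exact add_eq_left.mp (hext.2 hplus hminus hseg)

theorem stmt_16_general {d₀ d₁ M : ℕ}
    (N : Fin M → Matrix (Fin d₁ × Fin d₀) (Fin d₁ × Fin d₀) ℂ)
    (hext : N ∈ {W | IsInstrument d₁ d₀ M W}.extremePoints ℝ) :
    ∑ i, (N i).rank ^ 2 ≤ d₀ ^ 2 := by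
  choose V hV using fun i => ((isInstrument_iff.mp hext.1).1 i).exists_eq_mul_conjTranspose
  have hVrank : ∀ i, (V i).rank = Fintype.card (Fin (N i).rank) := fun i => by
    rw [Fintype.card_fin, ← rank_self_mul_conjTranspose, ← hV i]
  by_contra! hlt
  obtain ⟨H, hHsa, hH0, hHker⟩ :=
    exists_isSelfAdjoint_ne_zero_partialTraceConjSum_eq_zero V (by simpa using hlt)
  obtain ⟨ε, hε, hεH⟩ :=
    exists_pos_posSemidef_one_add_smul_and_one_sub_smul fun i => (hHsa.apply i).isHermitian
  have hconj : ∀ i (K : Matrix (Fin (N i).rank) (Fin (N i).rank) ℂ),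
      N i + V i * K * (V i)ᴴ = V i * (1 + K) * (V i)ᴴ := fun i K => by
    rw [Matrix.mul_add, Matrix.add_mul, Matrix.mul_one, ← hV i]
  have hD : (fun i => V i * ((ε : ℂ) • H i) * (V i)ᴴ) = 0 := by
    refine eq_zero_of_mem_extremePoints_isInstrument hext ?_ (fun i => ?_) (fun i => ?_)
    · have := (partialTraceConjSum V).map_smul (ε : ℂ) H
      rwa [hHker, smul_zero] at this
    · rw [hconj]
      exact (hεH i).1.mul_mul_conjTranspose_same (V i)
    · rw [sub_eq_add_neg, ← Matrix.neg_mul, ← Matrix.mul_neg, hconj, ← sub_eq_add_neg]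
      exact (hεH i).2.mul_mul_conjTranspose_same (V i)
  refine hH0 (funext fun i => ?_)
  have := eq_zero_of_mul_mul_conjTranspose_eq_zero (hVrank i) (congrFun hD i)
  exact (smul_eq_zero.mp this).resolve_left (by exact_mod_cast hε.ne')

theorem stmt_16 {d₀ d₁ M : ℕ}
    (N : Fin M → Matrix (Fin d₁ × Fin d₀) (Fin d₁ × Fin d₀) ℂ)
    (hN : IsInstrument d₁ d₀ M N)
    (hext : N ∈ {W | IsInstrument d₁ d₀ M W}.extremePoints ℝ) :
    ∑ i, (N i).rank ^ 2 ≤ d₀ ^ 2 :=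
  stmt_16_general N hext
end

section
/- Let {N_i}_{i=1}^M be a quantum instrument from ℋ₀ to ℋ₁, and for each i let N_i = ∑_{m=1}^{r_i} |K_m^(i)⟩⟩⟨⟨K_m^(i)| with {K_m^(i)}_{m=1}^{r_i} linearly independent linear maps ℋ₀ → ℋ₁ (a minimal Kraus representation of each N_i). Then the instrument {N_i}_{i=1}^M is extremal if and only if the family of operators {K_m^(i)† K_n^(i) : 1 ≤ i ≤ M, 1 ≤ m, n ≤ r_i} on ℋ₀ is linearly independent over ℂ. -/
open Matrix Kronecker
open scoped ComplexOrder

/-!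
Let `V i` be the matrix whose columns are the vectorized Kraus operators `|K i m⟩⟩`. A family of
`r i × r i` matrices `c` defines Choi operators `C(c) i = V i * c i * (V i)ᴴ` (`choiOf`), with
`N = C(1)`, and the partial-trace condition on `C(c)` reads
`Φ(c) = ∑ c i m n • (K i n)ᴴ * K i m = 1` (`krausGram`); `Φ` is injective exactly when the
`(K i m)ᴴ * K i n` are linearly independent. Because each `V i` is injective, an instrument `W`
with `a • W ≤ N` (`a > 0`) is some `C(c)` with `Φ(c) = 1 = Φ(1)`, so if `Φ` is injective then
`W = N`, which is extremality. Conversely a nonzero element of `ker Φ` can be taken selfadjoint,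
say `e`, and then `C(1 + t • e)` and `C(1 - t • e)` are distinct instruments with midpoint `N`
for small `t > 0`.
-/

namespace Matrix

variable {𝕜 ι κ : Type*} [RCLike 𝕜] [Fintype ι] [Fintype κ] [DecidableEq κ]

theorem exists_mul_eq_one_of_injective_mulVec {V : Matrix ι κ 𝕜}
    (hV : Function.Injective V.mulVec) : ∃ L : Matrix κ ι 𝕜, L * V = 1 := by
  obtain ⟨G, hG⟩ := (PosDef.conjTranspose_mul_self V hV).isUnit.exists_left_inv
  exact ⟨G * Vᴴ, by rw [Matrix.mul_assoc, hG]⟩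

theorem mul_mul_conjTranspose_injective {V : Matrix ι κ 𝕜} (hV : Function.Injective V.mulVec) :
    Function.Injective fun c : Matrix κ κ 𝕜 => V * c * Vᴴ := by
  obtain ⟨L, hL⟩ := exists_mul_eq_one_of_injective_mulVec hV
  have hcancel : ∀ c : Matrix κ κ 𝕜, L * (V * c * Vᴴ) * Lᴴ = c := fun c => by
    simp only [Matrix.mul_assoc]
    rw [← Matrix.mul_assoc L V, hL, ← conjTranspose_mul, hL, conjTranspose_one, Matrix.one_mul,
      Matrix.mul_one]
  intro c c' h
  rw [← hcancel c, ← hcancel c']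
  exact congrArg (fun X : Matrix ι ι 𝕜 => L * X * Lᴴ) h

theorem PosSemidef.exists_eq_mul_mul_conjTranspose {V : Matrix ι κ 𝕜}
    (hV : Function.Injective V.mulVec) {B : Matrix ι ι 𝕜} (hB : B.PosSemidef)
    (hBV : (V * Vᴴ - B).PosSemidef) : ∃ c : Matrix κ κ 𝕜, B = V * c * Vᴴ := by
  obtain ⟨L, hL⟩ := exists_mul_eq_one_of_injective_mulVec hV
  have hker : ∀ x, Vᴴ *ᵥ x = 0 → B *ᵥ x = 0 := by
    intro x hx
    have h := hBV.dotProduct_mulVec_nonneg x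
    rw [sub_mulVec, dotProduct_sub, ← mulVec_mulVec, hx, mulVec_zero, dotProduct_zero, zero_sub,
      neg_nonneg] at h
    exact (hB.dotProduct_mulVec_zero_iff x).mp (le_antisymm h (hB.dotProduct_mulVec_nonneg x))
  have hBL : B * Lᴴ * Vᴴ = B := by
    refine ext_iff_mulVec.mpr fun v => ?_
    have hv : Vᴴ *ᵥ (v - Lᴴ *ᵥ (Vᴴ *ᵥ v)) = 0 := by
      rw [mulVec_sub, mulVec_mulVec, ← conjTranspose_mul, hL, conjTranspose_one, one_mulVec,
        sub_self]
    rw [← mulVec_mulVec, ← mulVec_mulVec, eq_comm, ← sub_eq_zero, ← mulVec_sub]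
    exact hker _ hv
  have hLB : V * L * B = B := by
    simpa [conjTranspose_mul, hB.isHermitian.eq, Matrix.mul_assoc] using
      congrArg (fun X : Matrix ι ι 𝕜 => Xᴴ) hBL
  refine ⟨L * B * Lᴴ, ?_⟩
  calc B = V * L * (B * Lᴴ * Vᴴ) := by rw [hBL, hLB]
    _ = V * (L * B * Lᴴ) * Vᴴ := by simp only [Matrix.mul_assoc]

section L2Operator

open scoped Matrix.Norms.L2Operator MatrixOrder

theorem IsHermitian.posSemidef_one_add_smul {e : Matrix κ κ ℂ} (he : e.IsHermitian) {t : ℝ}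
    (ht : |t| * ‖e‖ ≤ 1) : (1 + t • e).PosSemidef := by
  have hs : IsSelfAdjoint (t • e) := IsSelfAdjoint.smul (IsSelfAdjoint.all t) he
  have h1 : (1 - ‖t • e‖) • (1 : Matrix κ κ ℂ) |>.PosSemidef :=
    PosSemidef.one.smul (by rw [norm_smul, Real.norm_eq_abs]; linarith)
  convert h1.add (le_iff.mp hs.neg_algebraMap_norm_le_self) using 1
  rw [Algebra.algebraMap_eq_smul_one]
  module

theorem exists_pos_posSemidef_one_add_sub_smul {M : Type*} [Fintype M] {r : M → Type*}
    [∀ i, Fintype (r i)] [∀ i, DecidableEq (r i)] {e : (i : M) → Matrix (r i) (r i) ℂ}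
    (he : ∀ i, (e i).IsHermitian) :
    ∃ t : ℝ, 0 < t ∧ ∀ i, (1 + t • e i).PosSemidef ∧ (1 - t • e i).PosSemidef := by
  refine ⟨(‖e‖ + 1)⁻¹, by positivity, fun i => ?_⟩
  have ht : |(‖e‖ + 1)⁻¹| * ‖e i‖ ≤ 1 := by
    rw [abs_of_pos (by positivity), inv_mul_le_one₀ (by positivity)]
    linarith [norm_le_pi_norm e i]
  rw [sub_eq_add_neg, ← neg_smul]
  exact ⟨(he i).posSemidef_one_add_smul ht, (he i).posSemidef_one_add_smul (by rwa [abs_neg])⟩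

end L2Operator

end Matrix

open scoped ComplexStarModule in
theorem LinearMap.exists_isSelfAdjoint_ne_zero_of_map_eq_zero {A B : Type*} [AddCommGroup A]
    [Module ℂ A] [StarAddMonoid A] [StarModule ℂ A] [AddCommGroup B] [Module ℂ B]
    [StarAddMonoid B] [StarModule ℂ B] (f : A →ₗ[ℂ] B) (hf : ∀ a, f (star a) = star (f a))
    {a : A} (ha : a ≠ 0) (hfa : f a = 0) : ∃ b, IsSelfAdjoint b ∧ b ≠ 0 ∧ f b = 0 := by
  have hre : f (ℜ a) = 0 := by
    rw [realPart_apply_coe, map_smul_of_tower, map_add, hf, hfa, star_zero, add_zero, smul_zero]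
  have him : f (ℑ a) = 0 := by
    rw [imaginaryPart_apply_coe, map_smul, map_smul_of_tower, map_sub, hf, hfa, star_zero,
      sub_zero, smul_zero, smul_zero]
  rcases eq_or_ne (ℜ a : A) 0 with h0 | h0
  · refine ⟨ℑ a, (ℑ a).2, fun h1 => ha ?_, him⟩
    rw [← realPart_add_I_smul_imaginaryPart a, h0, h1, smul_zero, add_zero]
  · exact ⟨ℜ a, (ℜ a).2, h0, hre⟩

def partialTrace {R α β : Type*} [CommSemiring R] [Fintype α] :
    Matrix (α × β) (α × β) R →ₗ[R] Matrix β β R where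
  toFun X := Matrix.of fun j j' => ∑ k, X (k, j) (k, j')
  map_add' X Y := by ext; simp [Finset.sum_add_distrib]
  map_smul' c X := by ext; simp [Finset.mul_sum]

section Instrument

variable {d₁ d₀ : ℕ}

theorem partialTrace_outerCJ (A B : Matrix (Fin d₁) (Fin d₀) ℂ) :
    partialTrace (outerCJ A B) = (Bᴴ * A)ᵀ := by
  ext j j'
  simp only [partialTrace, outerCJ, LinearMap.coe_mk, AddHom.coe_mk, of_apply, transpose_apply,
    mul_apply, conjTranspose_apply]
  exact Finset.sum_congr rfl fun k _ => mul_comm _ _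

def vecCols {r : ℕ} (K : Fin r → Matrix (Fin d₁) (Fin d₀) ℂ) :
    Matrix (Fin d₁ × Fin d₀) (Fin r) ℂ :=
  Matrix.of fun p m => K m p.1 p.2

theorem mulVec_vecCols_injective {r : ℕ} {K : Fin r → Matrix (Fin d₁) (Fin d₀) ℂ}
    (hK : LinearIndependent ℂ K) : Function.Injective (vecCols K).mulVec := by
  rw [mulVec_injective_iff]
  exact hK.map' (LinearEquiv.curry ℂ ℂ (Fin d₁) (Fin d₀)).symm.toLinearMap
    (LinearEquiv.ker _)

theorem vecCols_mul_mul_conjTranspose {r : ℕ} (K : Fin r → Matrix (Fin d₁) (Fin d₀) ℂ)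
    (c : Matrix (Fin r) (Fin r) ℂ) :
    vecCols K * c * (vecCols K)ᴴ = ∑ m, ∑ n, c m n • outerCJ (K m) (K n) := by
  ext p q
  simp only [vecCols, outerCJ, mul_apply, of_apply, conjTranspose_apply, Matrix.sum_apply,
    Matrix.smul_apply, smul_eq_mul, Finset.sum_mul]
  rw [Finset.sum_comm]
  exact Finset.sum_congr rfl fun m _ => Finset.sum_congr rfl fun n _ => by ring

theorem vecCols_mul_conjTranspose {r : ℕ} (K : Fin r → Matrix (Fin d₁) (Fin d₀) ℂ) :
    vecCols K * (vecCols K)ᴴ = ∑ m, outerCJ (K m) (K m) := by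
  ext p q
  simp [vecCols, outerCJ, mul_apply, Matrix.sum_apply]

variable {M : ℕ} {r : Fin M → ℕ} (K : (i : Fin M) → Fin (r i) → Matrix (Fin d₁) (Fin d₀) ℂ)

def choiOf : ((i : Fin M) → Matrix (Fin (r i)) (Fin (r i)) ℂ) →ₗ[ℂ]
    Fin M → Matrix (Fin d₁ × Fin d₀) (Fin d₁ × Fin d₀) ℂ where
  toFun c i := vecCols (K i) * c i * (vecCols (K i))ᴴ
  map_add' c c' := by ext1 i; simp [Matrix.mul_add, Matrix.add_mul]
  map_smul' z c := by ext1 i; simp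

def krausGram :
    ((i : Fin M) → Matrix (Fin (r i)) (Fin (r i)) ℂ) →ₗ[ℂ] Matrix (Fin d₀) (Fin d₀) ℂ where
  toFun c := ∑ i, ∑ m, ∑ n, c i m n • ((K i n)ᴴ * K i m)
  map_add' c c' := by simp [add_smul, Finset.sum_add_distrib]
  map_smul' z c := by simp [Finset.smul_sum, smul_smul]

theorem partialTrace_sum_choiOf (c : (i : Fin M) → Matrix (Fin (r i)) (Fin (r i)) ℂ) :
    partialTrace (∑ i, choiOf K c i) = (krausGram K c)ᵀ := by
  simp [choiOf, krausGram, vecCols_mul_mul_conjTranspose, partialTrace_outerCJ, map_sum,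
    transpose_sum]

theorem krausGram_star (c : (i : Fin M) → Matrix (Fin (r i)) (Fin (r i)) ℂ) :
    krausGram K (star c) = star (krausGram K c) := by
  simp only [krausGram, LinearMap.coe_mk, AddHom.coe_mk, star_sum, star_smul, Pi.star_apply,
    star_apply, star_eq_conjTranspose, conjTranspose_mul, conjTranspose_conjTranspose]
  exact Finset.sum_congr rfl fun i _ => Finset.sum_comm

theorem linearIndependent_iff_injective_krausGram :
    LinearIndependent ℂ
        (fun x : Σ i : Fin M, Fin (r i) × Fin (r i) => (K x.1 x.2.1)ᴴ * K x.1 x.2.2) ↔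
      Function.Injective (krausGram K) := by
  have hsum : ∀ c : (i : Fin M) → Matrix (Fin (r i)) (Fin (r i)) ℂ,
      ∑ x : Σ i : Fin M, Fin (r i) × Fin (r i),
        c x.1 x.2.2 x.2.1 • ((K x.1 x.2.1)ᴴ * K x.1 x.2.2) = krausGram K c := by
    intro c
    rw [← Finset.univ_sigma_univ, Finset.sum_sigma]
    refine Finset.sum_congr rfl fun i _ => ?_
    rw [Fintype.sum_prod_type]
    exact Finset.sum_comm
  rw [Fintype.linearIndependent_iff, injective_iff_map_eq_zero]
  constructor
  · intro h c hc
    have hzero := h (fun x => c x.1 x.2.2 x.2.1) ((hsum c).trans hc)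
    ext i m n
    exact hzero ⟨i, (n, m)⟩
  · intro h g hg x
    have hzero := h (fun i m n => g ⟨i, (n, m)⟩) ((hsum _).symm.trans hg)
    exact congr_fun (congr_fun (congr_fun hzero x.1) x.2.2) x.2.1

theorem choiOf_injective (hK : ∀ i, LinearIndependent ℂ (K i)) :
    Function.Injective (choiOf K) := fun _ _ h =>
  funext fun i =>
    mul_mul_conjTranspose_injective (mulVec_vecCols_injective (hK i)) (congr_fun h i)

theorem choiOf_one : choiOf K 1 = fun i => ∑ m, outerCJ (K i m) (K i m) := by
  ext1 i
  simp [choiOf, vecCols_mul_conjTranspose]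

theorem isInstrument_choiOf_iff {c : (i : Fin M) → Matrix (Fin (r i)) (Fin (r i)) ℂ} :
    IsInstrument d₁ d₀ M (choiOf K c) ↔
      (∀ i, (choiOf K c i).PosSemidef) ∧ krausGram K c = 1 := by
  change _ ∧ partialTrace _ = 1 ↔ _
  rw [partialTrace_sum_choiOf, transpose_eq_one]

theorem exists_eq_choiOf_of_smul_le (hK : ∀ i, LinearIndependent ℂ (K i))
    {W : Fin M → Matrix (Fin d₁ × Fin d₀) (Fin d₁ × Fin d₀) ℂ} (hW : ∀ i, (W i).PosSemidef)
    {a : ℝ} (ha : 0 < a) (hWa : ∀ i, (choiOf K 1 i - a • W i).PosSemidef) :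
    ∃ c, W = choiOf K c := by
  have hc : ∀ i, ∃ c : Matrix (Fin (r i)) (Fin (r i)) ℂ,
      a • W i = vecCols (K i) * c * (vecCols (K i))ᴴ := fun i =>
    ((hW i).smul ha.le).exists_eq_mul_mul_conjTranspose (mulVec_vecCols_injective (hK i))
      (by simpa [choiOf] using hWa i)
  choose c hc using hc
  refine ⟨a⁻¹ • c, funext fun i => ?_⟩
  simp [choiOf, ← hc i, smul_smul, ha.ne']

theorem eq_choiOf_one_of_smul_le (hK : ∀ i, LinearIndependent ℂ (K i))
    (hinj : Function.Injective (krausGram K)) (h1 : krausGram K 1 = 1)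
    {W : Fin M → Matrix (Fin d₁ × Fin d₀) (Fin d₁ × Fin d₀) ℂ} (hW : IsInstrument d₁ d₀ M W)
    {a : ℝ} (ha : 0 < a) (hWa : ∀ i, (choiOf K 1 i - a • W i).PosSemidef) :
    W = choiOf K 1 := by
  obtain ⟨c, rfl⟩ := exists_eq_choiOf_of_smul_le K hK hW.1 ha hWa
  rw [hinj (((isInstrument_choiOf_iff K).mp hW).2.trans h1.symm)]

theorem isInstrument_choiOf_one_add_smul (h1 : krausGram K 1 = 1)
    {e : (i : Fin M) → Matrix (Fin (r i)) (Fin (r i)) ℂ} (he : krausGram K e = 0) {s : ℝ}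
    (hs : ∀ i, (1 + s • e i).PosSemidef) : IsInstrument d₁ d₀ M (choiOf K (1 + s • e)) :=
  (isInstrument_choiOf_iff K).mpr ⟨fun i => (hs i).mul_mul_conjTranspose_same _,
    by rw [map_add, LinearMap.map_smul_of_tower, he, smul_zero, add_zero, h1]⟩

theorem injective_krausGram_of_mem_extremePoints (hK : ∀ i, LinearIndependent ℂ (K i))
    (hext : choiOf K 1 ∈ {W | IsInstrument d₁ d₀ M W}.extremePoints ℝ) :
    Function.Injective (krausGram K) := by
  have h1 : krausGram K 1 = 1 := ((isInstrument_choiOf_iff K).mp hext.1).2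
  refine (injective_iff_map_eq_zero _).mpr fun c hc => by_contra fun hc0 => ?_
  obtain ⟨e, he, he0, hek⟩ :=
    (krausGram K).exists_isSelfAdjoint_ne_zero_of_map_eq_zero (krausGram_star K) hc0 hc
  obtain ⟨t, ht, hpsd⟩ := exists_pos_posSemidef_one_add_sub_smul (e := e) fun i => he.apply i
  have hseg : choiOf K 1 ∈ openSegment ℝ (choiOf K (1 + t • e)) (choiOf K (1 + (-t) • e)) :=
    ⟨1 / 2, 1 / 2, by norm_num, by norm_num, by norm_num, by
      simp only [map_add, LinearMap.map_smul_of_tower]; module⟩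
  have hte := choiOf_injective K hK ((mem_extremePoints.mp hext).2 _
    (isInstrument_choiOf_one_add_smul K h1 hek fun i => (hpsd i).1) _
    (isInstrument_choiOf_one_add_smul K h1 hek fun i => by
      simpa [sub_eq_add_neg] using (hpsd i).2) hseg).1
  exact he0 ((smul_eq_zero.mp (add_eq_left.mp hte)).resolve_left ht.ne')

theorem choiOf_one_mem_extremePoints (hK : ∀ i, LinearIndependent ℂ (K i))
    (hinj : Function.Injective (krausGram K)) (hN : IsInstrument d₁ d₀ M (choiOf K 1)) :
    choiOf K 1 ∈ {W | IsInstrument d₁ d₀ M W}.extremePoints ℝ := by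
  have h1 : krausGram K 1 = 1 := ((isInstrument_choiOf_iff K).mp hN).2
  refine mem_extremePoints.mpr ⟨hN, fun P hP Q hQ ⟨a, b, ha, hb, _, hPQ⟩ => ?_⟩
  refine ⟨eq_choiOf_one_of_smul_le K hK hinj h1 hP ha fun i => ?_,
    eq_choiOf_one_of_smul_le K hK hinj h1 hQ hb fun i => ?_⟩ <;> rw [← hPQ]
  · simpa using (hQ.1 i).smul hb.le
  · simpa using (hP.1 i).smul ha.le

end Instrument

theorem stmt_17 {d₀ d₁ M : ℕ}
    (N : Fin M → Matrix (Fin d₁ × Fin d₀) (Fin d₁ × Fin d₀) ℂ)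
    (hN : IsInstrument d₁ d₀ M N)
    (r : Fin M → ℕ) (K : (i : Fin M) → Fin (r i) → Matrix (Fin d₁) (Fin d₀) ℂ)
    (hKli : ∀ i, LinearIndependent ℂ (K i))
    (hdecomp : ∀ i, N i = ∑ m, outerCJ (K i m) (K i m)) :
    N ∈ {W | IsInstrument d₁ d₀ M W}.extremePoints ℝ ↔
      LinearIndependent ℂ
        (fun x : Σ i : Fin M, Fin (r i) × Fin (r i) => (K x.1 x.2.1)ᴴ * K x.1 x.2.2) := by
  obtain rfl : N = choiOf K 1 := by rw [choiOf_one]; exact funext hdecomp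
  rw [linearIndependent_iff_injective_krausGram]
  exact ⟨injective_krausGram_of_mem_extremePoints K hKli,
    fun hinj => choiOf_one_mem_extremePoints K hKli hinj hN⟩
end
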